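/- Fix N ≥ 1 and let T be one of the fourteen triangle singularity types. There exists an embedding of P(T) into Λ_N such that the root module (Λ_N/P̃, F_N) contains a root β with β² = −2/3 if and only if T ∈ {E14, Z13, Q12}. -/

import Mathlib

open scoped Classical

namespace Urabe

/-! ### Bilinear forms attached to Gram matrices -/

/-- The integral bilinear form attached to a Gram matrix. -/
def bilinZ {ι : Type*} [Fintype ι] (B : Matrix ι ι ℤ) (x y : ι → ℤ) : ℤ :=
  ∑ i, ∑ j, x i * B i j * y j

/-- The rational bilinear form attached to an integral Gram matrix. -/
def bilinQ {ι : Type*} [Fintype ι] (B : Matrix ι ι ℤ) (x y : ι → ℚ) : ℚ :=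
  ∑ i, ∑ j, x i * (B i j : ℚ) * y j

/-! ### Star graphs `T_{p,q,r}` and their lattices -/

/-- Adjacency for the star graph `T_{p,q,r}`: vertex `0` is the center, the three
arms consist of the vertices `1,…,p-1`, `p,…,p+q-2` and `p+q-1,…,p+q+r-3`. -/
def starAdj (p q r i j : ℕ) : Prop :=
  (i = 0 ∧ (j = 1 ∨ j = p ∨ j = p + q - 1)) ∨
  (j = 0 ∧ (i = 1 ∨ i = p ∨ i = p + q - 1)) ∨
  (j = i + 1 ∧ ((1 ≤ i ∧ j ≤ p - 1) ∨ (p ≤ i ∧ j ≤ p + q - 2) ∨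
      (p + q - 1 ≤ i ∧ j ≤ p + q + r - 3))) ∨
  (i = j + 1 ∧ ((1 ≤ j ∧ i ≤ p - 1) ∨ (p ≤ j ∧ i ≤ p + q - 2) ∨
      (p + q - 1 ≤ j ∧ i ≤ p + q + r - 3)))

/-- Gram matrix of the lattice `Q(T_{p,q,r})` of the star graph `T_{p,q,r}`:
`-2` on the diagonal, `1` for adjacent vertices, `0` otherwise. -/
noncomputable def starGram (p q r : ℕ) :
    Matrix (Fin (p + q + r - 2)) (Fin (p + q + r - 2)) ℤ :=
  Matrix.of fun i j =>
    if (i : ℕ) = (j : ℕ) then -2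
    else if starAdj p q r (i : ℕ) (j : ℕ) then 1 else 0

/-! ### The fourteen triangle singularities -/

inductive TriType
  | E12 | E13 | E14 | Z11 | Z12 | Z13 | Q10 | Q11 | Q12 | W12 | W13 | S11 | S12 | U12
deriving DecidableEq

/-- The Gabriélov triplet `(p₁, p₂, p₃)`. -/
def triplet : TriType → ℕ × ℕ × ℕ
  | .E12 => (2,3,7) | .E13 => (2,3,8) | .E14 => (2,3,9)
  | .Z11 => (2,4,5) | .Z12 => (2,4,6) | .Z13 => (2,4,7)
  | .Q10 => (3,3,4) | .Q11 => (3,3,5) | .Q12 => (3,3,6)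
  | .W12 => (2,5,5) | .W13 => (2,5,6)
  | .S11 => (3,4,4) | .S12 => (3,4,5)
  | .U12 => (4,4,4)

/-- The Milnor number `μ(T) = p₁ + p₂ + p₃`. -/
def mu (T : TriType) : ℕ := (triplet T).1 + (triplet T).2.1 + (triplet T).2.2

/-- Gram matrix of the Gabriélov lattice `Q(T_{p₁,p₂,p₃})` of type `T`. -/
noncomputable def gabGram (T : TriType) :
    Matrix (Fin (mu T - 2)) (Fin (mu T - 2)) ℤ :=
  starGram (triplet T).1 (triplet T).2.1 (triplet T).2.2

/-- The strange duality involution. -/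
def dual : TriType → TriType
  | .E12 => .E12 | .Z12 => .Z12 | .Q12 => .Q12 | .W12 => .W12 | .S12 => .S12 | .U12 => .U12
  | .E13 => .Z11 | .Z11 => .E13
  | .E14 => .Q10 | .Q10 => .E14
  | .Z13 => .Q11 | .Q11 => .Z13
  | .W13 => .S11 | .S11 => .W13

/-- Rank of the lattice `P(T) = Q(Γ*)`. -/
def Prank (T : TriType) : ℕ := mu (dual T) - 2

/-- Gram matrix of the lattice `P(T)`: the Gabriélov lattice of the dual type `T*`. -/
noncomputable def PGram (T : TriType) : Matrix (Fin (Prank T)) (Fin (Prank T)) ℤ :=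
  gabGram (dual T)

/-! ### The even unimodular lattices `Λ_N = E8(-1) ⊕ E8(-1) ⊕ H^N` -/

/-- Gram matrix of `E8(-1)`; its Dynkin graph is the star graph `T_{2,3,5}`. -/
noncomputable def E8Gram : Matrix (Fin 8) (Fin 8) ℤ := starGram 2 3 5

/-- Gram matrix of the hyperbolic plane `H`. -/
def HGram : Matrix (Fin 2) (Fin 2) ℤ := !![0, 1; 1, 0]

/-- Index type for `Λ_N = E8(-1) ⊕ E8(-1) ⊕ H^N`. -/
abbrev LambdaIx (N : ℕ) := (Fin 8 ⊕ Fin 8) ⊕ (Fin N × Fin 2)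

/-- Gram matrix of `Λ_N = E8(-1) ⊕ E8(-1) ⊕ H^N`. -/
noncomputable def LambdaGram (N : ℕ) : Matrix (LambdaIx N) (LambdaIx N) ℤ :=
  Matrix.of fun i j =>
    match i, j with
    | .inl (.inl a), .inl (.inl b) => E8Gram a b
    | .inl (.inr a), .inl (.inr b) => E8Gram a b
    | .inr (k, a), .inr (l, b) => if k = l then HGram a b else 0
    | _, _ => 0

/-! ### Embeddings, primitive hulls, orthogonal complements -/

/-- An embedding of lattices: an injective `ℤ`-linear map preserving the bilinear forms. -/
def IsEmbedding {ι κ : Type*} [Fintype ι] [Fintype κ]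
    (A : Matrix ι ι ℤ) (B : Matrix κ κ ℤ) (f : (ι → ℤ) →ₗ[ℤ] (κ → ℤ)) : Prop :=
  Function.Injective f ∧ ∀ x y, bilinZ B (f x) (f y) = bilinZ A x y

/-- The primitive hull `M̃ = {x ∈ L : m • x ∈ M for some nonzero scalar m}`. -/
def primHull {R L : Type*} [CommRing R] [IsDomain R] [AddCommGroup L] [Module R L]
    (M : Submodule R L) : Submodule R L where
  carrier := {x | ∃ m : R, m ≠ 0 ∧ m • x ∈ M}
  zero_mem' := ⟨1, one_ne_zero, by simp⟩
  add_mem' := by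
    rintro x y ⟨m, hm, hmx⟩ ⟨n, hn, hny⟩
    refine ⟨m * n, mul_ne_zero hm hn, ?_⟩
    have h : (m * n) • (x + y) = n • (m • x) + m • (n • y) := by
      rw [smul_add, smul_smul, smul_smul, mul_comm n m]
    rw [h]
    exact M.add_mem (M.smul_mem n hmx) (M.smul_mem m hny)
  smul_mem' := by
    rintro c x ⟨m, hm, hmx⟩
    refine ⟨m, hm, ?_⟩
    rw [smul_smul, mul_comm, ← smul_smul]
    exact M.smul_mem c hmx

/-- A submodule is primitive if it coincides with its primitive hull. -/
def IsPrimitive {R L : Type*} [CommRing R] [IsDomain R] [AddCommGroup L] [Module R L]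
    (M : Submodule R L) : Prop :=
  primHull M = M

lemma bilinZ_add_left {ι : Type*} [Fintype ι] (B : Matrix ι ι ℤ) (x y z : ι → ℤ) :
    bilinZ B (x + y) z = bilinZ B x z + bilinZ B y z := by
  simp [bilinZ, add_mul, Finset.sum_add_distrib]

lemma bilinZ_smul_left {ι : Type*} [Fintype ι] (B : Matrix ι ι ℤ) (c : ℤ) (x y : ι → ℤ) :
    bilinZ B (c • x) y = c * bilinZ B x y := by
  simp [bilinZ, Finset.mul_sum, mul_assoc]

/-- The orthogonal complement of a submodule inside the lattice with Gram matrix `B`. -/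
def orthComp {ι : Type*} [Fintype ι] (B : Matrix ι ι ℤ) (M : Submodule ℤ (ι → ℤ)) :
    Submodule ℤ (ι → ℤ) where
  carrier := {x | ∀ m ∈ M, bilinZ B x m = 0}
  zero_mem' := by
    intro m hm
    have : (0 : ι → ℤ) = (0 : ℤ) • (0 : ι → ℤ) := by simp
    rw [this, bilinZ_smul_left]; ring
  add_mem' := by
    intro x y hx hy m hm
    rw [bilinZ_add_left, hx m hm, hy m hm]; ring
  smul_mem' := by
    intro c x hx m hm
    rw [bilinZ_smul_left, hx m hm]; ring

/-! ### The induced rational form on the quotient `Λ/M̃` -/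

/-- Coefficientwise embedding `ℤ^ι → ℚ^ι`. -/
def toQ {ι : Type*} (x : ι → ℤ) : ι → ℚ := fun i => (x i : ℚ)

/-- The `ℚ`-span of a `ℤ`-submodule inside `ℚ^ι`. -/
def spanQ {ι : Type*} (M : Submodule ℤ (ι → ℤ)) : Submodule ℚ (ι → ℚ) :=
  Submodule.span ℚ (toQ '' (M : Set (ι → ℤ)))

/-- The orthogonal projection (with respect to `B`) of a vector onto the `ℚ`-span of `M`,
whenever it exists (and is unique, e.g. when `M` is nondegenerate). -/
noncomputable def projPart {ι : Type*} [Fintype ι] (B : Matrix ι ι ℤ)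
    (M : Submodule ℤ (ι → ℤ)) (x : ι → ℚ) : ι → ℚ :=
  if h : ∃ p ∈ spanQ M, ∀ q ∈ spanQ M, bilinQ B (x - p) q = 0 then h.choose else 0

/-- The canonically induced `ℚ`-valued bilinear form on the quotient `Λ/M̃`,
defined via orthogonal projection onto the orthogonal complement of `M` in `Λ ⊗ ℚ`. -/
noncomputable def inducedForm {ι : Type*} [Fintype ι] (B : Matrix ι ι ℤ)
    (M : Submodule ℤ (ι → ℤ)) (x y : (ι → ℤ) ⧸ primHull M) : ℚ :=
  bilinQ B (toQ x.out - projPart B M (toQ x.out))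
           (toQ y.out - projPart B M (toQ y.out))

/-- `F_N`: the image of the orthogonal complement of `M` under the quotient map `Λ → Λ/M̃`. -/
noncomputable def FNsub {ι : Type*} [Fintype ι] (B : Matrix ι ι ℤ)
    (M : Submodule ℤ (ι → ℤ)) : Submodule ℤ ((ι → ℤ) ⧸ primHull M) :=
  (orthComp B M).map (primHull M).mkQ

/-! ### Root modules and full embeddings -/

/-- A root of the pair `(L, FL)`. -/
def IsRoot {L : Type*} [AddCommGroup L] [Module ℤ L]
    (b : L → L → ℚ) (FL : Submodule ℤ L) (a : L) : Prop :=
  (a ∈ FL ∧ b a a = -2) ∨ b a a = -1 ∨ b a a = -2/3 ∨ (b a a = -1/2 ∧ (2 : ℤ) • a ∈ FL)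

/-- The pair `(L, FL)` is a root module: (R1) `2(x,α)/α²` is an integer for all `x` and
all roots `α`, and (R2) each reflection `s_α(x) = x - (2(x,α)/α²)α` preserves `FL`. -/
def IsRootModule {L : Type*} [AddCommGroup L] [Module ℤ L]
    (b : L → L → ℚ) (FL : Submodule ℤ L) : Prop :=
  (∀ x a : L, IsRoot b FL a → ∃ k : ℤ, 2 * b x a = (k : ℚ) * b a a) ∧
  (∀ a : L, IsRoot b FL a → ∀ x ∈ FL, ∀ k : ℤ,
      2 * b x a = (k : ℚ) * b a a → x - k • a ∈ FL)

/-- A full embedding of the lattice with Gram matrix `A` into the root module `(L, FL)`: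
an injective form-preserving `ℤ`-linear map whose image is full, i.e. every root of the
primitive hull of the image already lies in the image. -/
def IsFullEmbedding {κ : Type*} [Fintype κ] {L : Type*} [AddCommGroup L] [Module ℤ L]
    (A : Matrix κ κ ℤ) (b : L → L → ℚ) (FL : Submodule ℤ L)
    (g : (κ → ℤ) →ₗ[ℤ] L) : Prop :=
  Function.Injective g ∧ (∀ x y, b (g x) (g y) = (bilinZ A x y : ℚ)) ∧
  (∀ a ∈ primHull (LinearMap.range g), IsRoot b FL a → a ∈ LinearMap.range g)

/-! ### Dynkin graphs with components of type A, D, E -/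

/-- A connected Dynkin graph of type `A`, `D` or `E`. -/
inductive ADE
  | A : ℕ → ADE
  | D : ℕ → ADE
  | E : ℕ → ADE
deriving DecidableEq

/-- Each connected ADE graph is a star graph: `A_k = T_{1,1,k}`, `D_ℓ = T_{2,2,ℓ-2}`,
`E_m = T_{2,3,m-3}`. -/
def ADE.triple : ADE → ℕ × ℕ × ℕ
  | .A k => (1, 1, k)
  | .D l => (2, 2, l - 2)
  | .E m => (2, 3, m - 3)

/-- The valid ADE types: `A_k (k ≥ 1)`, `D_ℓ (ℓ ≥ 4)`, `E_6, E_7, E_8`. -/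
def ADE.valid : ADE → Prop
  | .A k => 1 ≤ k
  | .D l => 4 ≤ l
  | .E m => m = 6 ∨ m = 7 ∨ m = 8

/-- Number of vertices of a connected ADE graph. -/
def ADE.rank (c : ADE) : ℕ := c.triple.1 + c.triple.2.1 + c.triple.2.2 - 2

/-- Gram matrix of the root lattice of a connected ADE graph. -/
noncomputable def ADE.gram (c : ADE) : Matrix (Fin c.rank) (Fin c.rank) ℤ :=
  starGram c.triple.1 c.triple.2.1 c.triple.2.2

/-- Vertex set of a Dynkin graph given as a list of connected ADE components. -/
abbrev graphIx (G : List ADE) := (i : Fin G.length) × Fin (G.get i).rank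

/-- Gram matrix of the root lattice `Q(G)` of a Dynkin graph `G` (block diagonal sum
of the Gram matrices of the components). -/
noncomputable def graphGram (G : List ADE) : Matrix (graphIx G) (graphIx G) ℤ :=
  Matrix.of fun a b =>
    if h : a.1 = b.1 then (G.get a.1).gram a.2 (Fin.cast (by rw [h]) b.2) else 0

/-- There is a full embedding of `Q(G)` into the root module `(Λ/M̃, F)` attached to the
submodule `M` of the lattice with Gram matrix `B`. -/
noncomputable def HasFullEmb (G : List ADE) {ι : Type*} [Fintype ι]
    (B : Matrix ι ι ℤ) (M : Submodule ℤ (ι → ℤ)) : Prop :=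
  ∃ g : (graphIx G → ℤ) →ₗ[ℤ] ((ι → ℤ) ⧸ primHull M),
    IsFullEmbedding (graphGram G) (inducedForm B M) (FNsub B M) g




open Matrix
set_option linter.unusedSectionVars false

section General
variable {ι : Type*} [Fintype ι] {B : Matrix ι ι ℤ}

lemma bilinZ_eq_dot (B : Matrix ι ι ℤ) (x y : ι → ℤ) :
    bilinZ B x y = x ⬝ᵥ B.mulVec y := by
  simp [bilinZ, dotProduct, Matrix.mulVec, Finset.mul_sum, mul_assoc]

lemma bilinQ_eq_dot (B : Matrix ι ι ℤ) (x y : ι → ℚ) :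
    bilinQ B x y = x ⬝ᵥ (B.map (Int.cast : ℤ → ℚ)).mulVec y := by
  simp [bilinQ, dotProduct, Matrix.mulVec, Finset.mul_sum, mul_assoc]

lemma bilinQ_add_left (B : Matrix ι ι ℤ) (x y z : ι → ℚ) :
    bilinQ B (x + y) z = bilinQ B x z + bilinQ B y z := by
  simp [bilinQ, add_mul, Finset.sum_add_distrib]

lemma bilinQ_sub_left (B : Matrix ι ι ℤ) (x y z : ι → ℚ) :
    bilinQ B (x - y) z = bilinQ B x z - bilinQ B y z := by
  simp [bilinQ, sub_mul, Finset.sum_sub_distrib]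

lemma bilinQ_sub_right (B : Matrix ι ι ℤ) (x y z : ι → ℚ) :
    bilinQ B x (y - z) = bilinQ B x y - bilinQ B x z := by
  simp [bilinQ, mul_sub, Finset.sum_sub_distrib]

lemma bilinQ_smul_left (B : Matrix ι ι ℤ) (c : ℚ) (x y : ι → ℚ) :
    bilinQ B (c • x) y = c * bilinQ B x y := by
  simp [bilinQ, Finset.mul_sum, mul_assoc]

lemma bilinQ_smul_right (B : Matrix ι ι ℤ) (c : ℚ) (x y : ι → ℚ) :
    bilinQ B x (c • y) = c * bilinQ B x y := by
  simp only [bilinQ, Finset.mul_sum]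
  refine Finset.sum_congr rfl fun i _ => Finset.sum_congr rfl fun j _ => ?_
  simp [Pi.smul_apply]; ring

lemma bilinQ_sum_left (B : Matrix ι ι ℤ) {γ : Type*} (s : Finset γ) (g : γ → ι → ℚ)
    (y : ι → ℚ) : bilinQ B (∑ i ∈ s, g i) y = ∑ i ∈ s, bilinQ B (g i) y := by
  induction s using Finset.cons_induction with
  | empty => simp [bilinQ]
  | cons a s ha ih => rw [Finset.sum_cons, Finset.sum_cons, bilinQ_add_left, ih]

lemma bilinQ_toQ (B : Matrix ι ι ℤ) (x y : ι → ℤ) :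
    bilinQ B (toQ x) (toQ y) = (bilinZ B x y : ℚ) := by
  simp only [bilinQ, bilinZ, toQ]
  push_cast
  rfl

lemma bilinZ_comm (hB : ∀ i j, B i j = B j i) (x y : ι → ℤ) :
    bilinZ B x y = bilinZ B y x := by
  rw [bilinZ, bilinZ, Finset.sum_comm]
  refine Finset.sum_congr rfl fun i _ => Finset.sum_congr rfl fun j _ => ?_
  rw [hB j i]; ring

lemma toQ_add (x y : ι → ℤ) : toQ (x + y) = toQ x + toQ y := by
  funext i; simp [toQ]

lemma toQ_sub (x y : ι → ℤ) : toQ (x - y) = toQ x - toQ y := by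
  funext i; simp [toQ]

lemma toQ_smul (m : ℤ) (x : ι → ℤ) : toQ (m • x) = (m : ℚ) • toQ x := by
  funext i; simp [toQ]

lemma toQ_sum {γ : Type*} (s : Finset γ) (g : γ → ι → ℤ) :
    toQ (∑ i ∈ s, g i) = ∑ i ∈ s, toQ (g i) := by
  funext j; simp [toQ, Finset.sum_apply]

end General

section Eval
variable {n : ℕ}

lemma self_eq_sum_single (z : Fin n → ℤ) :
    z = ∑ i, z i • Pi.single i (1 : ℤ) := by
  funext j
  simp [Finset.sum_apply, Pi.single_apply, Finset.sum_ite_eq']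

lemma map_eq_sum_single {L : Type*} [AddCommGroup L] [Module ℤ L]
    (f : (Fin n → ℤ) →ₗ[ℤ] L) (z : Fin n → ℤ) :
    f z = ∑ i, z i • f (Pi.single i (1 : ℤ)) := by
  conv_lhs => rw [self_eq_sum_single z]
  rw [map_sum]
  exact Finset.sum_congr rfl fun i _ => map_zsmul f (z i) _

lemma bilinZ_single (A : Matrix (Fin n) (Fin n) ℤ)
    (z : Fin n → ℤ) (j : Fin n) :
    bilinZ A z (Pi.single j (1 : ℤ)) = ∑ i, z i * A i j := by
  simp [bilinZ, Pi.single_apply, Finset.sum_ite_eq', mul_ite]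

end Eval

section Extend
variable {ι κ : Type*} [Fintype ι] [Fintype κ]

noncomputable def extendL (g : ι → κ) (hg : Function.Injective g) :
    (ι → ℤ) →ₗ[ℤ] (κ → ℤ) where
  toFun y := Function.extend g y 0
  map_add' y z := by
    funext j
    by_cases hj : ∃ i, g i = j
    · obtain ⟨i, rfl⟩ := hj
      simp [hg.extend_apply]
    · simp [Function.extend_apply' _ _ _ hj]
  map_smul' m y := by
    funext j
    by_cases hj : ∃ i, g i = j
    · obtain ⟨i, rfl⟩ := hj
      simp [hg.extend_apply]
    · simp [Function.extend_apply' _ _ _ hj]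

lemma extendL_apply_mem (g : ι → κ) (hg : Function.Injective g) (y : ι → ℤ) (i : ι) :
    extendL g hg y (g i) = y i := hg.extend_apply _ _ _

lemma sum_extend (g : ι → κ) (hg : Function.Injective g) (y : ι → ℤ) (H : κ → ℤ) :
    ∑ j, extendL g hg y j * H j = ∑ i, y i * H (g i) := by
  rw [← Finset.sum_subset (Finset.subset_univ (Finset.univ.image g))]
  · rw [Finset.sum_image (fun a _ b _ h => hg h)]
    exact Finset.sum_congr rfl fun i _ => by rw [extendL_apply_mem]
  · intro j _ hj
    have hj' : ¬ ∃ i, g i = j := by simpa [Finset.mem_image] using hj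
    show Function.extend g y 0 j * H j = 0
    rw [Function.extend_apply' _ _ _ hj']
    simp

lemma bilinZ_extendL (B : Matrix κ κ ℤ) (g : ι → κ) (hg : Function.Injective g)
    (y z : ι → ℤ) :
    bilinZ B (extendL g hg y) (extendL g hg z) = bilinZ (B.submatrix g g) y z := by
  unfold bilinZ
  have h1 : ∀ j, ∑ l, extendL g hg z l * B j l = ∑ i, z i * B j (g i) :=
    fun j => sum_extend g hg z (fun l => B j l)
  calc ∑ j, ∑ l, extendL g hg y j * B j l * extendL g hg z l
      = ∑ j, extendL g hg y j * (∑ l, extendL g hg z l * B j l) := by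
        refine Finset.sum_congr rfl fun j _ => ?_
        rw [Finset.mul_sum]
        exact Finset.sum_congr rfl fun l _ => by ring
    _ = ∑ j, extendL g hg y j * (∑ i, z i * B j (g i)) := by
        refine Finset.sum_congr rfl fun j _ => ?_
        rw [h1]
    _ = ∑ i, y i * (∑ i', z i' * B (g i) (g i')) :=
        sum_extend g hg y _
    _ = ∑ i, ∑ i', y i * B.submatrix g g i i' * z i' := by
        refine Finset.sum_congr rfl fun i _ => ?_
        rw [Finset.mul_sum]
        exact Finset.sum_congr rfl fun i' _ => by
          simp [Matrix.submatrix_apply]; ring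

lemma bilinZ_vecMul {n : ℕ} (A : Matrix (Fin n) (Fin n) ℤ) (B : Matrix κ κ ℤ)
    (F : Matrix (Fin n) κ ℤ) (hF : F * B * Fᵀ = A) (x y : Fin n → ℤ) :
    bilinZ B (x ᵥ* F) (y ᵥ* F) = bilinZ A x y := by
  rw [bilinZ_eq_dot, bilinZ_eq_dot]
  calc (x ᵥ* F) ⬝ᵥ B *ᵥ (y ᵥ* F)
      = (x ᵥ* F) ⬝ᵥ (B * Fᵀ) *ᵥ y := by rw [Matrix.mulVec_vecMul]
    _ = ((x ᵥ* F) ᵥ* (B * Fᵀ)) ⬝ᵥ y := Matrix.dotProduct_mulVec _ _ _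
    _ = (x ᵥ* (F * (B * Fᵀ))) ⬝ᵥ y := by rw [Matrix.vecMul_vecMul]
    _ = (x ᵥ* A) ⬝ᵥ y := by rw [← Matrix.mul_assoc, hF]
    _ = x ⬝ᵥ A *ᵥ y := (Matrix.dotProduct_mulVec _ _ _).symm

end Extend

section Nondeg
variable {n : ℕ}

/-- Nondegeneracy over ℚ from an integral quasi-inverse. -/
lemma nondegQ_of_inv (A Bs : Matrix (Fin n) (Fin n) ℤ) (d : ℤ) (hd : d ≠ 0)
    (hAB : ∀ i k, ∑ j, A i j * Bs j k = if i = k then d else 0)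
    (c : Fin n → ℚ) (hc : ∀ j, ∑ i, c i * (A i j : ℚ) = 0) : c = 0 := by
  funext k
  have h : ∑ j, (∑ i, c i * (A i j : ℚ)) * (Bs j k : ℚ) = 0 := by
    simp [hc]
  have h2 : ∑ j, (∑ i, c i * (A i j : ℚ)) * (Bs j k : ℚ)
      = ∑ i, c i * ((∑ j, A i j * Bs j k : ℤ) : ℚ) := by
    calc ∑ j, (∑ i, c i * (A i j : ℚ)) * (Bs j k : ℚ)
        = ∑ j, ∑ i, c i * (A i j : ℚ) * (Bs j k : ℚ) := by
          exact Finset.sum_congr rfl fun j _ => Finset.sum_mul ..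
      _ = ∑ i, ∑ j, c i * (A i j : ℚ) * (Bs j k : ℚ) := Finset.sum_comm
      _ = ∑ i, c i * ((∑ j, A i j * Bs j k : ℤ) : ℚ) := by
          refine Finset.sum_congr rfl fun i _ => ?_
          push_cast
          rw [Finset.mul_sum]
          exact Finset.sum_congr rfl fun j _ => by ring
  rw [h2] at h
  have h3 : ∀ i, ((∑ j, A i j * Bs j k : ℤ) : ℚ) = if i = k then (d : ℚ) else 0 := by
    intro i; rw [hAB i k]; split <;> simp
  rw [Finset.sum_congr rfl (fun i _ => by rw [h3 i])] at h
  simp only [mul_ite, mul_zero, Finset.sum_ite_eq', Finset.mem_univ, if_true] at h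
  rcases mul_eq_zero.mp h with h | h
  · simp [h]
  · exact absurd (by exact_mod_cast h) hd

lemma nondegZ_of_inv (A Bs : Matrix (Fin n) (Fin n) ℤ) (d : ℤ) (hd : d ≠ 0)
    (hAB : ∀ i k, ∑ j, A i j * Bs j k = if i = k then d else 0)
    (z : Fin n → ℤ) (hz : ∀ j, ∑ i, z i * A i j = 0) : z = 0 := by
  funext k
  have h : ∑ j, (∑ i, z i * A i j) * Bs j k = 0 := by simp [hz]
  have h2 : ∑ j, (∑ i, z i * A i j) * Bs j k = ∑ i, z i * (∑ j, A i j * Bs j k) := by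
    calc ∑ j, (∑ i, z i * A i j) * Bs j k
        = ∑ j, ∑ i, z i * A i j * Bs j k := by
          exact Finset.sum_congr rfl fun j _ => Finset.sum_mul ..
      _ = ∑ i, ∑ j, z i * A i j * Bs j k := Finset.sum_comm
      _ = ∑ i, z i * (∑ j, A i j * Bs j k) := by
          refine Finset.sum_congr rfl fun i _ => ?_
          rw [Finset.mul_sum]
          exact Finset.sum_congr rfl fun j _ => by ring
  rw [h2] at h
  rw [Finset.sum_congr rfl (fun i _ => by rw [hAB i k])] at h
  simp only [mul_ite, mul_zero, Finset.sum_ite_eq', Finset.mem_univ, if_true] at h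
  rcases mul_eq_zero.mp h with h | h
  · simp [h]
  · exact absurd h hd

end Nondeg

section General2
variable {ι : Type*} [Fintype ι] {n : ℕ}

lemma bilinQ_sum_right (B : Matrix ι ι ℤ) {γ : Type*} (s : Finset γ) (x : ι → ℚ)
    (g : γ → ι → ℚ) : bilinQ B x (∑ i ∈ s, g i) = ∑ i ∈ s, bilinQ B x (g i) := by
  induction s using Finset.cons_induction with
  | empty => simp [bilinQ]
  | cons a s ha ih =>
      rw [Finset.sum_cons, Finset.sum_cons, ← ih]
      simp [bilinQ, mul_add, Finset.sum_add_distrib]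

lemma bilinZ_single_single (A : Matrix (Fin n) (Fin n) ℤ) (i j : Fin n) :
    bilinZ A (Pi.single i (1 : ℤ)) (Pi.single j 1) = A i j := by
  rw [bilinZ_single]
  simp [Pi.single_apply, Finset.sum_ite_eq']

end General2


/-! span machinery -/

section Span
variable {ι : Type*} [Fintype ι] {n : ℕ}

lemma toQ_mem_spanQ {M : Submodule ℤ (ι → ℤ)} {u : ι → ℤ} (hu : u ∈ M) :
    toQ u ∈ spanQ M := Submodule.subset_span ⟨u, hu, rfl⟩

lemma spanQ_repr (f : (Fin n → ℤ) →ₗ[ℤ] (ι → ℤ)) {q : ι → ℚ}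
    (hq : q ∈ spanQ (LinearMap.range f)) :
    ∃ c : Fin n → ℚ, q = ∑ i, c i • toQ (f (Pi.single i 1)) := by
  induction hq using Submodule.span_induction with
  | mem x hx =>
      obtain ⟨u, hu, rfl⟩ := hx
      obtain ⟨z, rfl⟩ := hu
      refine ⟨fun i => (z i : ℚ), ?_⟩
      rw [map_eq_sum_single f z, toQ_sum]
      refine Finset.sum_congr rfl fun i _ => ?_
      rw [toQ_smul]
  | zero => exact ⟨0, by simp⟩
  | add x y _ _ hx hy =>
      obtain ⟨c, rfl⟩ := hx; obtain ⟨c', rfl⟩ := hy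
      refine ⟨c + c', ?_⟩
      rw [← Finset.sum_add_distrib]
      exact Finset.sum_congr rfl fun i _ => by rw [Pi.add_apply, add_smul]
  | smul a x _ hx =>
      obtain ⟨c, rfl⟩ := hx
      refine ⟨a • c, ?_⟩
      rw [Finset.smul_sum]
      exact Finset.sum_congr rfl fun i _ => by rw [Pi.smul_apply, smul_eq_mul, mul_smul]

variable (A : Matrix (Fin n) (Fin n) ℤ) (B : Matrix ι ι ℤ)
variable (f : (Fin n → ℤ) →ₗ[ℤ] (ι → ℤ))

lemma orthQ_span (v : ι → ℚ)
    (hv : ∀ j : Fin n, bilinQ B v (toQ (f (Pi.single j 1))) = 0) :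
    ∀ q ∈ spanQ (LinearMap.range f), bilinQ B v q = 0 := by
  intro q hq
  obtain ⟨c, rfl⟩ := spanQ_repr f hq
  rw [bilinQ_sum_right]
  refine Finset.sum_eq_zero fun i _ => ?_
  rw [bilinQ_smul_right, hv i, mul_zero]

lemma bilinQ_repr_left (c : Fin n → ℚ) (X : ι → ℚ) :
    bilinQ B (∑ i, c i • toQ (f (Pi.single i 1))) X
      = ∑ i, c i * bilinQ B (toQ (f (Pi.single i 1))) X := by
  rw [bilinQ_sum_left]
  exact Finset.sum_congr rfl fun i _ => bilinQ_smul_left ..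

lemma bilinQ_repr_single
    (hpres : ∀ x y, bilinZ B (f x) (f y) = bilinZ A x y) (c : Fin n → ℚ) (j : Fin n) :
    bilinQ B (∑ i, c i • toQ (f (Pi.single i 1))) (toQ (f (Pi.single j 1)))
      = ∑ i, c i * (A i j : ℚ) := by
  rw [bilinQ_repr_left]
  refine Finset.sum_congr rfl fun i _ => ?_
  rw [bilinQ_toQ, hpres, bilinZ_single_single]

lemma proj_unique
    (hpres : ∀ x y, bilinZ B (f x) (f y) = bilinZ A x y)
    (hnd : ∀ c : Fin n → ℚ, (∀ j, ∑ i, c i * (A i j : ℚ) = 0) → c = 0)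
    (X p₁ p₂ : ι → ℚ)
    (h₁m : p₁ ∈ spanQ (LinearMap.range f)) (h₂m : p₂ ∈ spanQ (LinearMap.range f))
    (h₁ : ∀ q ∈ spanQ (LinearMap.range f), bilinQ B (X - p₁) q = 0)
    (h₂ : ∀ q ∈ spanQ (LinearMap.range f), bilinQ B (X - p₂) q = 0) : p₁ = p₂ := by
  have hδm : p₁ - p₂ ∈ spanQ (LinearMap.range f) := Submodule.sub_mem _ h₁m h₂m
  have hδo : ∀ q ∈ spanQ (LinearMap.range f), bilinQ B (p₁ - p₂) q = 0 := by
    intro q hq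
    have hsub : p₁ - p₂ = (X - p₂) - (X - p₁) := by abel
    rw [hsub, bilinQ_sub_left, h₂ q hq, h₁ q hq, sub_zero]
  obtain ⟨c, hc⟩ := spanQ_repr f hδm
  have hc0 : c = 0 := by
    apply hnd
    intro j
    have h0 := hδo (toQ (f (Pi.single j 1))) (toQ_mem_spanQ ⟨_, rfl⟩)
    rw [hc, bilinQ_repr_single A B f hpres] at h0
    exact h0
  have h : p₁ - p₂ = 0 := by rw [hc, hc0]; simp
  exact sub_eq_zero.mp h

end Span

section Main
variable {ι : Type*} [Fintype ι] {n : ℕ}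
variable (A : Matrix (Fin n) (Fin n) ℤ) (B : Matrix ι ι ℤ)
variable (f : (Fin n → ℤ) →ₗ[ℤ] (ι → ℤ))

lemma key_forward (hB : ∀ i j, B i j = B j i)
    (hpres : ∀ x y, bilinZ B (f x) (f y) = bilinZ A x y)
    (β : (ι → ℤ) ⧸ primHull (LinearMap.range f))
    (hβ : inducedForm B (LinearMap.range f) β β = -2/3) :
    ∃ (t : ℤ) (v : Fin n → ℤ) (c : Fin n → ℚ),
      (∀ j, ∑ i, c i * (A i j : ℚ) = (v j : ℚ)) ∧
      ((t : ℚ) - ∑ i, c i * (v i : ℚ) = -2/3) := by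
  rw [inducedForm] at hβ
  by_cases hex : ∃ p ∈ spanQ (LinearMap.range f),
      ∀ q ∈ spanQ (LinearMap.range f), bilinQ B (toQ β.out - p) q = 0
  case neg =>
    exfalso
    rw [projPart, dif_neg hex, sub_zero, bilinQ_toQ] at hβ
    have h3 : ((3 * bilinZ B β.out β.out : ℤ) : ℚ) = -2 := by push_cast; rw [hβ]; ring
    have h4 : (3 * bilinZ B β.out β.out : ℤ) = -2 := by exact_mod_cast h3
    omega
  case pos =>
    rw [projPart, dif_pos hex] at hβ
    obtain ⟨hmem, horth⟩ := hex.choose_spec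
    obtain ⟨c, hc⟩ := spanQ_repr f hmem
    refine ⟨bilinZ B β.out β.out, fun j => bilinZ B β.out (f (Pi.single j 1)), c, ?_, ?_⟩
    · intro j
      have h0 := horth (toQ (f (Pi.single j 1))) (toQ_mem_spanQ ⟨_, rfl⟩)
      rw [bilinQ_sub_left, hc, bilinQ_repr_single A B f hpres, sub_eq_zero, bilinQ_toQ] at h0
      exact h0.symm
    · have hp0 : bilinQ B (toQ β.out - hex.choose) hex.choose = 0 :=
        horth hex.choose hmem
      have hval : bilinQ B (toQ β.out - hex.choose) (toQ β.out - hex.choose)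
          = bilinQ B (toQ β.out) (toQ β.out)
            - bilinQ B hex.choose (toQ β.out) := by
        rw [bilinQ_sub_right, hp0, sub_zero, bilinQ_sub_left]
      rw [hval] at hβ
      rw [bilinQ_toQ] at hβ
      rw [hc, bilinQ_repr_left] at hβ
      have hterm : ∀ i : Fin n, bilinQ B (toQ (f (Pi.single i 1))) (toQ β.out)
          = ((bilinZ B β.out (f (Pi.single i 1)) : ℤ) : ℚ) := fun i => by
        rw [bilinQ_toQ, bilinZ_comm hB]
      simp only [hterm] at hβ
      exact hβ

end Main

section Extract
variable {n : ℕ}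

lemma extract (A Bs : Matrix (Fin n) (Fin n) ℤ) (d : ℤ)
    (hAB : ∀ i k, ∑ j, A i j * Bs j k = if i = k then d else 0)
    (t : ℤ) (v : Fin n → ℤ) (c : Fin n → ℚ)
    (hsys : ∀ j, ∑ i, c i * (A i j : ℚ) = (v j : ℚ))
    (hval : (t : ℚ) - ∑ i, c i * (v i : ℚ) = -2/3) :
    3 * (∑ j, ∑ k, v j * Bs j k * v k) = 3 * d * t + 2 * d := by
  have hm : ((∑ j, ∑ k, v j * Bs j k * v k : ℤ) : ℚ)
      = (d : ℚ) * ∑ i, c i * (v i : ℚ) := by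
    push_cast
    calc ∑ j, ∑ k, (v j : ℚ) * (Bs j k : ℚ) * (v k : ℚ)
        = ∑ j, ∑ k, (∑ i, c i * (A i j : ℚ)) * (Bs j k : ℚ) * (v k : ℚ) := by
          refine Finset.sum_congr rfl fun j _ => Finset.sum_congr rfl fun k _ => ?_
          rw [hsys j]
      _ = ∑ j, ∑ k, ∑ i, c i * (A i j : ℚ) * (Bs j k : ℚ) * (v k : ℚ) := by
          refine Finset.sum_congr rfl fun j _ => Finset.sum_congr rfl fun k _ => ?_
          rw [Finset.sum_mul, Finset.sum_mul]
      _ = ∑ j, ∑ i, ∑ k, c i * (A i j : ℚ) * (Bs j k : ℚ) * (v k : ℚ) := by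
          exact Finset.sum_congr rfl fun j _ => Finset.sum_comm
      _ = ∑ i, ∑ j, ∑ k, c i * (A i j : ℚ) * (Bs j k : ℚ) * (v k : ℚ) := Finset.sum_comm
      _ = ∑ i, c i * ∑ k, ((∑ j, (A i j : ℚ) * (Bs j k : ℚ)) * (v k : ℚ)) := by
          refine Finset.sum_congr rfl fun i _ => ?_
          rw [Finset.mul_sum]
          rw [Finset.sum_comm]
          refine Finset.sum_congr rfl fun k _ => ?_
          rw [Finset.sum_mul, Finset.mul_sum]
          exact Finset.sum_congr rfl fun j _ => by ring
      _ = ∑ i, c i * ((d : ℚ) * (v i : ℚ)) := by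
          refine Finset.sum_congr rfl fun i _ => ?_
          congr 1
          have hcast : ∀ k, (∑ j, (A i j : ℚ) * (Bs j k : ℚ))
              = ((if i = k then d else 0 : ℤ) : ℚ) := by
            intro k
            rw [← hAB i k]
            push_cast
            rfl
          calc ∑ k, (∑ j, (A i j : ℚ) * (Bs j k : ℚ)) * (v k : ℚ)
              = ∑ k, ((if i = k then d else 0 : ℤ) : ℚ) * (v k : ℚ) := by
                exact Finset.sum_congr rfl fun k _ => by rw [hcast k]
            _ = (d : ℚ) * (v i : ℚ) := by
                simp [Finset.sum_ite_eq, ite_mul]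
      _ = (d : ℚ) * ∑ i, c i * (v i : ℚ) := by
          rw [Finset.mul_sum]
          exact Finset.sum_congr rfl fun i _ => by ring
  have hs : (∑ i, c i * (v i : ℚ)) = (t : ℚ) + 2/3 := by linarith
  rw [hs] at hm
  have h2 : ((3 * ∑ j, ∑ k, v j * Bs j k * v k : ℤ) : ℚ)
      = ((3 * d * t + 2 * d : ℤ) : ℚ) := by
    push_cast
    push_cast at hm
    rw [hm]; ring
  exact_mod_cast h2

lemma sq_emod3 (s : ℤ) : s * s % 3 = 0 ∨ s * s % 3 = 1 := by
  have h := Int.mul_emod s s 3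
  have h3 : s % 3 = 0 ∨ s % 3 = 1 ∨ s % 3 = 2 := by omega
  rcases h3 with h3 | h3 | h3 <;> rw [h3] at h <;> omega

lemma wwT_sum (Bs C : Matrix (Fin n) (Fin n) ℤ) (w : Fin n → ℤ)
    (hCw : ∀ j k, Bs j k = 3 * C j k - w j * w k) (v : Fin n → ℤ) :
    ∑ j, ∑ k, v j * Bs j k * v k
      = 3 * (∑ j, ∑ k, v j * C j k * v k) - (∑ j, w j * v j) * (∑ j, w j * v j) := by
  calc ∑ j, ∑ k, v j * Bs j k * v k
      = ∑ j, ∑ k, (3 * (v j * C j k * v k) - (v j * w j) * (w k * v k)) := by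
        refine Finset.sum_congr rfl fun j _ => Finset.sum_congr rfl fun k _ => ?_
        rw [hCw j k]; ring
    _ = 3 * (∑ j, ∑ k, v j * C j k * v k) - (∑ j, w j * v j) * (∑ j, w j * v j) := by
        rw [Finset.sum_mul_sum]
        rw [Finset.mul_sum]
        rw [← Finset.sum_sub_distrib]
        refine Finset.sum_congr rfl fun j _ => ?_
        rw [Finset.mul_sum, ← Finset.sum_sub_distrib]
        refine Finset.sum_congr rfl fun k _ => by ring

end Extract

section Backward
variable {ι : Type*} [Fintype ι] {n : ℕ}

lemma exists_beta (A : Matrix (Fin n) (Fin n) ℤ) (B : Matrix ι ι ℤ)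
    (f : (Fin n → ℤ) →ₗ[ℤ] (ι → ℤ))
    (hpres : ∀ x y, bilinZ B (f x) (f y) = bilinZ A x y)
    (hnd : ∀ c : Fin n → ℚ, (∀ j, ∑ i, c i * (A i j : ℚ) = 0) → c = 0)
    (x : ι → ℤ) (k : ℤ) (hk : k ≠ 0) (w : Fin n → ℤ)
    (horth : ∀ j, bilinZ B (k • x - f w) (f (Pi.single j 1)) = 0)
    (hval : 3 * bilinZ B (k • x - f w) (k • x - f w) = -2 * k ^ 2) :
    ∃ β : (ι → ℤ) ⧸ primHull (LinearMap.range f),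
      inducedForm B (LinearMap.range f) β β = -2/3 := by
  refine ⟨Submodule.Quotient.mk x, ?_⟩
  set β : (ι → ℤ) ⧸ primHull (LinearMap.range f) := Submodule.Quotient.mk x with hβdef
  set y : ι → ℤ := k • x - f w with hy
  have hout : (Submodule.Quotient.mk β.out : (ι → ℤ) ⧸ primHull (LinearMap.range f)) = β :=
    Quotient.out_eq β
  have hhull : β.out - x ∈ primHull (LinearMap.range f) :=
    (Submodule.Quotient.eq _).mp (hout.trans hβdef)
  obtain ⟨m, hm0, hmM⟩ := hhull
  obtain ⟨z, hz⟩ := hmM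
  have hmq : (m : ℚ) ≠ 0 := Int.cast_ne_zero.mpr hm0
  have hkq : (k : ℚ) ≠ 0 := Int.cast_ne_zero.mpr hk
  set p' : ι → ℚ := (k : ℚ)⁻¹ • toQ (f w) + (m : ℚ)⁻¹ • toQ (f z) with hp'
  have hp'mem : p' ∈ spanQ (LinearMap.range f) :=
    Submodule.add_mem _
      (Submodule.smul_mem _ _ (toQ_mem_spanQ ⟨w, rfl⟩))
      (Submodule.smul_mem _ _ (toQ_mem_spanQ ⟨z, rfl⟩))
  have e1 : (m : ℚ)⁻¹ • toQ (f z) = toQ β.out - toQ x := by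
    rw [hz, toQ_smul, smul_smul, inv_mul_cancel₀ hmq, one_smul, toQ_sub]
  have hXp : toQ β.out - p' = (k : ℚ)⁻¹ • toQ y := by
    have e2 : toQ β.out - p' = toQ x - (k : ℚ)⁻¹ • toQ (f w) := by
      rw [hp', e1]; abel
    rw [e2, hy, toQ_sub, toQ_smul, smul_sub, smul_smul, inv_mul_cancel₀ hkq, one_smul]
  have hyorth : ∀ q ∈ spanQ (LinearMap.range f), bilinQ B (toQ y) q = 0 := by
    refine orthQ_span B f (toQ y) fun j => ?_
    rw [bilinQ_toQ, ← hy] at *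
    rw [horth j]
    norm_num
  have horthp' : ∀ q ∈ spanQ (LinearMap.range f), bilinQ B (toQ β.out - p') q = 0 := by
    intro q hq
    rw [hXp, bilinQ_smul_left, hyorth q hq, mul_zero]
  have hex : ∃ p ∈ spanQ (LinearMap.range f),
      ∀ q ∈ spanQ (LinearMap.range f), bilinQ B (toQ β.out - p) q = 0 :=
    ⟨p', hp'mem, horthp'⟩
  rw [inducedForm, projPart, dif_pos hex]
  obtain ⟨hmem, horth2⟩ := hex.choose_spec
  have hpp : hex.choose = p' :=
    proj_unique A B f hpres hnd (toQ β.out) _ _ hmem hp'mem horth2 horthp'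
  rw [hpp, hXp, bilinQ_smul_left, bilinQ_smul_right, bilinQ_toQ]
  have hvq : (3 : ℚ) * ((bilinZ B y y : ℤ) : ℚ) = -2 * (k : ℚ) ^ 2 := by
    rw [hy]
    exact_mod_cast hval
  field_simp
  nlinarith [hvq, sq_nonneg ((k : ℚ))]

end Backward


instance starAdjDec (p q r i j : ℕ) : Decidable (starAdj p q r i j) := by
  unfold starAdj
  exact inferInstance

def starAdjB (p q r i j : ℕ) : Bool := decide (starAdj p q r i j)

lemma starAdjB_iff (p q r i j : ℕ) : starAdjB p q r i j = true ↔ starAdj p q r i j := by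
  rw [starAdjB]
  exact decide_eq_true_iff

lemma starGram_apply (p q r : ℕ) (i j : Fin (p + q + r - 2)) :
    starGram p q r i j =
      if (i : ℕ) = (j : ℕ) then -2
      else if starAdjB p q r (i : ℕ) (j : ℕ) then 1 else 0 := by
  simp only [starGram, Matrix.of_apply]
  by_cases h : (i : ℕ) = (j : ℕ)
  · rw [if_pos h, if_pos h]
  · rw [if_neg h, if_neg h]
    by_cases ha : starAdj p q r (i : ℕ) (j : ℕ)
    · rw [if_pos ha, if_pos ((starAdjB_iff p q r i j).mpr ha)]
    · rw [if_neg ha, if_neg (fun hb => ha ((starAdjB_iff p q r i j).mp hb))]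

lemma starGram_eq {p q r : ℕ} (M : Matrix (Fin (p + q + r - 2)) (Fin (p + q + r - 2)) ℤ)
    (h : ∀ i j : Fin (p + q + r - 2),
      (if (i : ℕ) = (j : ℕ) then (-2 : ℤ)
        else if starAdjB p q r (i : ℕ) (j : ℕ) then 1 else 0) = M i j) :
    starGram p q r = M := by
  ext i j
  rw [starGram_apply]
  exact h i j

lemma starAdj_comm {p q r i j : ℕ} (h : starAdj p q r i j) : starAdj p q r j i := by
  unfold starAdj at h ⊢
  rcases h with h | h | h | h
  · exact Or.inr (Or.inl h)
  · exact Or.inl h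
  · exact Or.inr (Or.inr (Or.inr h))
  · exact Or.inr (Or.inr (Or.inl h))

lemma starGram_symm (p q r : ℕ) (i j : Fin (p + q + r - 2)) :
    starGram p q r i j = starGram p q r j i := by
  rw [starGram_apply, starGram_apply]
  by_cases h : (i : ℕ) = (j : ℕ)
  · rw [if_pos h, if_pos h.symm]
  · have h' : ¬ (j : ℕ) = (i : ℕ) := fun hh => h hh.symm
    rw [if_neg h, if_neg h']
    by_cases ha : starAdjB p q r (i : ℕ) (j : ℕ) = true
    · have ha' : starAdjB p q r (j : ℕ) (i : ℕ) = true := by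
        rw [starAdjB_iff] at ha ⊢
        exact starAdj_comm ha
      rw [if_pos ha, if_pos ha']
    · have ha' : ¬ starAdjB p q r (j : ℕ) (i : ℕ) = true := fun hb => by
        rw [starAdjB_iff] at hb
        exact ha ((starAdjB_iff p q r i j).mpr (starAdj_comm hb))
      rw [if_neg ha, if_neg ha']

instance decForallMatL {n m : ℕ} (f : Matrix (Fin n) (Fin m) ℤ) (g : Fin n → Fin m → ℤ) :
    Decidable (∀ i j, f i j = g i j) :=
  @Nat.decidableForallFin n _ (fun i => @Nat.decidableForallFin m _ (fun j => Int.decEq (f i j) (g i j)))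
instance decForallMatR {n m : ℕ} (f : Fin n → Fin m → ℤ) (g : Matrix (Fin n) (Fin m) ℤ) :
    Decidable (∀ i j, f i j = g i j) :=
  @Nat.decidableForallFin n _ (fun i => @Nat.decidableForallFin m _ (fun j => Int.decEq (f i j) (g i j)))
instance decForallMatLR {n m : ℕ} (f g : Matrix (Fin n) (Fin m) ℤ) :
    Decidable (∀ i j, f i j = g i j) :=
  @Nat.decidableForallFin n _ (fun i => @Nat.decidableForallFin m _ (fun j => Int.decEq (f i j) (g i j)))

def E8G : Matrix (Fin 8) (Fin 8) ℤ :=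
  !![-2, 1, 1, 0, 1, 0, 0, 0;
     1, -2, 0, 0, 0, 0, 0, 0;
     1, 0, -2, 1, 0, 0, 0, 0;
     0, 0, 1, -2, 0, 0, 0, 0;
     1, 0, 0, 0, -2, 1, 0, 0;
     0, 0, 0, 0, 1, -2, 1, 0;
     0, 0, 0, 0, 0, 1, -2, 1;
     0, 0, 0, 0, 0, 0, 1, -2]

lemma E8Gram_eq : starGram 2 3 5 = E8G := starGram_eq _ (by decide)

/-! pinned: triangle singularities and Λ_N -/

/-! the rank-18 sublattice E8 ⊕ E8 ⊕ H -/

abbrev Ix18 := (Fin 8 ⊕ Fin 8) ⊕ Fin 2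

def Gram18 : Matrix Ix18 Ix18 ℤ :=
  Matrix.of fun i j =>
    match i, j with
    | .inl (.inl a), .inl (.inl b) => E8G a b
    | .inl (.inr a), .inl (.inr b) => E8G a b
    | .inr a, .inr b => HGram a b
    | _, _ => 0

def iota18 (N : ℕ) (hN : 0 < N) : Ix18 → LambdaIx N := fun i =>
  match i with
  | .inl a => .inl a
  | .inr b => .inr (⟨0, hN⟩, b)

lemma iota18_inj (N : ℕ) (hN : 0 < N) : Function.Injective (iota18 N hN) := by
  intro a b h
  cases a with
  | inl a => cases b with
    | inl b => simpa [iota18] using h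
    | inr b => simp [iota18] at h
  | inr a => cases b with
    | inl b => simp [iota18] at h
    | inr b => simpa [iota18] using h

lemma lambda_submatrix (N : ℕ) (hN : 0 < N) :
    (LambdaGram N).submatrix (iota18 N hN) (iota18 N hN) = Gram18 := by
  ext a b
  rcases a with (a | a) | a <;> rcases b with (b | b) | b <;>
    simp [LambdaGram, Gram18, iota18, Matrix.submatrix_apply, E8Gram, E8Gram_eq]

lemma E8Gram_symm (i j : Fin 8) : E8Gram i j = E8Gram j i := starGram_symm 2 3 5 i j

lemma HGram_symm (i j : Fin 2) : HGram i j = HGram j i := by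
  fin_cases i <;> fin_cases j <;> rfl

lemma LambdaGram_symm (N : ℕ) (i j : LambdaIx N) : LambdaGram N i j = LambdaGram N j i := by
  rcases i with (a | a) | ⟨k, a⟩ <;> rcases j with (b | b) | ⟨l, b⟩ <;>
    simp [LambdaGram, E8Gram_symm, HGram_symm]
  by_cases h : k = l
  · subst h
    simp [HGram_symm]
  · rw [if_neg h, if_neg (fun hh : l = k => h hh.symm)]


/-! numeric data -/
/-! numeric data -/

def gE12 : Matrix (Fin 10) (Fin 10) ℤ :=
  !![-2, 1, 1, 0, 1, 0, 0, 0, 0, 0;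
   1, -2, 0, 0, 0, 0, 0, 0, 0, 0;
   1, 0, -2, 1, 0, 0, 0, 0, 0, 0;
   0, 0, 1, -2, 0, 0, 0, 0, 0, 0;
   1, 0, 0, 0, -2, 1, 0, 0, 0, 0;
   0, 0, 0, 0, 1, -2, 1, 0, 0, 0;
   0, 0, 0, 0, 0, 1, -2, 1, 0, 0;
   0, 0, 0, 0, 0, 0, 1, -2, 1, 0;
   0, 0, 0, 0, 0, 0, 0, 1, -2, 1;
   0, 0, 0, 0, 0, 0, 0, 0, 1, -2]

def bE12 : Matrix (Fin 10) (Fin 10) ℤ :=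
  !![-42, -21, -28, -14, -36, -30, -24, -18, -12, -6;
   -21, -10, -14, -7, -18, -15, -12, -9, -6, -3;
   -28, -14, -18, -9, -24, -20, -16, -12, -8, -4;
   -14, -7, -9, -4, -12, -10, -8, -6, -4, -2;
   -36, -18, -24, -12, -30, -25, -20, -15, -10, -5;
   -30, -15, -20, -10, -25, -20, -16, -12, -8, -4;
   -24, -12, -16, -8, -20, -16, -12, -9, -6, -3;
   -18, -9, -12, -6, -15, -12, -9, -6, -4, -2;
   -12, -6, -8, -4, -10, -8, -6, -4, -2, -1;
   -6, -3, -4, -2, -5, -4, -3, -2, -1, 0]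

def gE13 : Matrix (Fin 9) (Fin 9) ℤ :=
  !![-2, 1, 1, 0, 0, 1, 0, 0, 0;
   1, -2, 0, 0, 0, 0, 0, 0, 0;
   1, 0, -2, 1, 0, 0, 0, 0, 0;
   0, 0, 1, -2, 1, 0, 0, 0, 0;
   0, 0, 0, 1, -2, 0, 0, 0, 0;
   1, 0, 0, 0, 0, -2, 1, 0, 0;
   0, 0, 0, 0, 0, 1, -2, 1, 0;
   0, 0, 0, 0, 0, 0, 1, -2, 1;
   0, 0, 0, 0, 0, 0, 0, 1, -2]

def bE13 : Matrix (Fin 9) (Fin 9) ℤ :=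
  !![40, 20, 30, 20, 10, 32, 24, 16, 8;
   20, 9, 15, 10, 5, 16, 12, 8, 4;
   30, 15, 21, 14, 7, 24, 18, 12, 6;
   20, 10, 14, 8, 4, 16, 12, 8, 4;
   10, 5, 7, 4, 1, 8, 6, 4, 2;
   32, 16, 24, 16, 8, 24, 18, 12, 6;
   24, 12, 18, 12, 6, 18, 12, 8, 4;
   16, 8, 12, 8, 4, 12, 8, 4, 2;
   8, 4, 6, 4, 2, 6, 4, 2, 0]

def gE14 : Matrix (Fin 8) (Fin 8) ℤ :=
  !![-2, 1, 0, 1, 0, 1, 0, 0;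
   1, -2, 1, 0, 0, 0, 0, 0;
   0, 1, -2, 0, 0, 0, 0, 0;
   1, 0, 0, -2, 1, 0, 0, 0;
   0, 0, 0, 1, -2, 0, 0, 0;
   1, 0, 0, 0, 0, -2, 1, 0;
   0, 0, 0, 0, 0, 1, -2, 1;
   0, 0, 0, 0, 0, 0, 1, -2]

def bE14 : Matrix (Fin 8) (Fin 8) ℤ :=
  !![-36, -24, -12, -24, -12, -27, -18, -9;
   -24, -14, -7, -16, -8, -18, -12, -6;
   -12, -7, -2, -8, -4, -9, -6, -3;
   -24, -16, -8, -14, -7, -18, -12, -6;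
   -12, -8, -4, -7, -2, -9, -6, -3;
   -27, -18, -9, -18, -9, -18, -12, -6;
   -18, -12, -6, -12, -6, -12, -6, -3;
   -9, -6, -3, -6, -3, -6, -3, 0]

def gZ11 : Matrix (Fin 11) (Fin 11) ℤ :=
  !![-2, 1, 1, 0, 1, 0, 0, 0, 0, 0, 0;
   1, -2, 0, 0, 0, 0, 0, 0, 0, 0, 0;
   1, 0, -2, 1, 0, 0, 0, 0, 0, 0, 0;
   0, 0, 1, -2, 0, 0, 0, 0, 0, 0, 0;
   1, 0, 0, 0, -2, 1, 0, 0, 0, 0, 0;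
   0, 0, 0, 0, 1, -2, 1, 0, 0, 0, 0;
   0, 0, 0, 0, 0, 1, -2, 1, 0, 0, 0;
   0, 0, 0, 0, 0, 0, 1, -2, 1, 0, 0;
   0, 0, 0, 0, 0, 0, 0, 1, -2, 1, 0;
   0, 0, 0, 0, 0, 0, 0, 0, 1, -2, 1;
   0, 0, 0, 0, 0, 0, 0, 0, 0, 1, -2]

def bZ11 : Matrix (Fin 11) (Fin 11) ℤ :=
  !![48, 24, 32, 16, 42, 36, 30, 24, 18, 12, 6;
   24, 11, 16, 8, 21, 18, 15, 12, 9, 6, 3;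
   32, 16, 20, 10, 28, 24, 20, 16, 12, 8, 4;
   16, 8, 10, 4, 14, 12, 10, 8, 6, 4, 2;
   42, 21, 28, 14, 35, 30, 25, 20, 15, 10, 5;
   36, 18, 24, 12, 30, 24, 20, 16, 12, 8, 4;
   30, 15, 20, 10, 25, 20, 15, 12, 9, 6, 3;
   24, 12, 16, 8, 20, 16, 12, 8, 6, 4, 2;
   18, 9, 12, 6, 15, 12, 9, 6, 3, 2, 1;
   12, 6, 8, 4, 10, 8, 6, 4, 2, 0, 0;
   6, 3, 4, 2, 5, 4, 3, 2, 1, 0, -1]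

def gZ12 : Matrix (Fin 10) (Fin 10) ℤ :=
  !![-2, 1, 1, 0, 0, 1, 0, 0, 0, 0;
   1, -2, 0, 0, 0, 0, 0, 0, 0, 0;
   1, 0, -2, 1, 0, 0, 0, 0, 0, 0;
   0, 0, 1, -2, 1, 0, 0, 0, 0, 0;
   0, 0, 0, 1, -2, 0, 0, 0, 0, 0;
   1, 0, 0, 0, 0, -2, 1, 0, 0, 0;
   0, 0, 0, 0, 0, 1, -2, 1, 0, 0;
   0, 0, 0, 0, 0, 0, 1, -2, 1, 0;
   0, 0, 0, 0, 0, 0, 0, 1, -2, 1;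
   0, 0, 0, 0, 0, 0, 0, 0, 1, -2]

def bZ12 : Matrix (Fin 10) (Fin 10) ℤ :=
  !![-48, -24, -36, -24, -12, -40, -32, -24, -16, -8;
   -24, -10, -18, -12, -6, -20, -16, -12, -8, -4;
   -36, -18, -24, -16, -8, -30, -24, -18, -12, -6;
   -24, -12, -16, -8, -4, -20, -16, -12, -8, -4;
   -12, -6, -8, -4, 0, -10, -8, -6, -4, -2;
   -40, -20, -30, -20, -10, -30, -24, -18, -12, -6;
   -32, -16, -24, -16, -8, -24, -16, -12, -8, -4;
   -24, -12, -18, -12, -6, -18, -12, -6, -4, -2;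
   -16, -8, -12, -8, -4, -12, -8, -4, 0, 0;
   -8, -4, -6, -4, -2, -6, -4, -2, 0, 2]

def gZ13 : Matrix (Fin 9) (Fin 9) ℤ :=
  !![-2, 1, 0, 1, 0, 1, 0, 0, 0;
   1, -2, 1, 0, 0, 0, 0, 0, 0;
   0, 1, -2, 0, 0, 0, 0, 0, 0;
   1, 0, 0, -2, 1, 0, 0, 0, 0;
   0, 0, 0, 1, -2, 0, 0, 0, 0;
   1, 0, 0, 0, 0, -2, 1, 0, 0;
   0, 0, 0, 0, 0, 1, -2, 1, 0;
   0, 0, 0, 0, 0, 0, 1, -2, 1;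
   0, 0, 0, 0, 0, 0, 0, 1, -2]

def bZ13 : Matrix (Fin 9) (Fin 9) ℤ :=
  !![45, 30, 15, 30, 15, 36, 27, 18, 9;
   30, 16, 8, 20, 10, 24, 18, 12, 6;
   15, 8, 1, 10, 5, 12, 9, 6, 3;
   30, 20, 10, 16, 8, 24, 18, 12, 6;
   15, 10, 5, 8, 1, 12, 9, 6, 3;
   36, 24, 12, 24, 12, 24, 18, 12, 6;
   27, 18, 9, 18, 9, 18, 9, 6, 3;
   18, 12, 6, 12, 6, 12, 6, 0, 0;
   9, 6, 3, 6, 3, 6, 3, 0, -3]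

def gQ10 : Matrix (Fin 12) (Fin 12) ℤ :=
  !![-2, 1, 1, 0, 1, 0, 0, 0, 0, 0, 0, 0;
   1, -2, 0, 0, 0, 0, 0, 0, 0, 0, 0, 0;
   1, 0, -2, 1, 0, 0, 0, 0, 0, 0, 0, 0;
   0, 0, 1, -2, 0, 0, 0, 0, 0, 0, 0, 0;
   1, 0, 0, 0, -2, 1, 0, 0, 0, 0, 0, 0;
   0, 0, 0, 0, 1, -2, 1, 0, 0, 0, 0, 0;
   0, 0, 0, 0, 0, 1, -2, 1, 0, 0, 0, 0;
   0, 0, 0, 0, 0, 0, 1, -2, 1, 0, 0, 0;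
   0, 0, 0, 0, 0, 0, 0, 1, -2, 1, 0, 0;
   0, 0, 0, 0, 0, 0, 0, 0, 1, -2, 1, 0;
   0, 0, 0, 0, 0, 0, 0, 0, 0, 1, -2, 1;
   0, 0, 0, 0, 0, 0, 0, 0, 0, 0, 1, -2]

def bQ10 : Matrix (Fin 12) (Fin 12) ℤ :=
  !![-54, -27, -36, -18, -48, -42, -36, -30, -24, -18, -12, -6;
   -27, -12, -18, -9, -24, -21, -18, -15, -12, -9, -6, -3;
   -36, -18, -22, -11, -32, -28, -24, -20, -16, -12, -8, -4;
   -18, -9, -11, -4, -16, -14, -12, -10, -8, -6, -4, -2;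
   -48, -24, -32, -16, -40, -35, -30, -25, -20, -15, -10, -5;
   -42, -21, -28, -14, -35, -28, -24, -20, -16, -12, -8, -4;
   -36, -18, -24, -12, -30, -24, -18, -15, -12, -9, -6, -3;
   -30, -15, -20, -10, -25, -20, -15, -10, -8, -6, -4, -2;
   -24, -12, -16, -8, -20, -16, -12, -8, -4, -3, -2, -1;
   -18, -9, -12, -6, -15, -12, -9, -6, -3, 0, 0, 0;
   -12, -6, -8, -4, -10, -8, -6, -4, -2, 0, 2, 1;
   -6, -3, -4, -2, -5, -4, -3, -2, -1, 0, 1, 2]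

def cQ10 : Matrix (Fin 12) (Fin 12) ℤ :=
  !![-18, -9, -12, -6, -16, -14, -12, -10, -8, -6, -4, -2;
   -9, -4, -6, -3, -8, -7, -6, -5, -4, -3, -2, -1;
   -12, -6, -7, -3, -10, -9, -8, -6, -5, -4, -2, -1;
   -6, -3, -3, 0, -4, -4, -4, -2, -2, -2, 0, 0;
   -16, -8, -10, -4, -12, -11, -10, -7, -6, -5, -2, -1;
   -14, -7, -9, -4, -11, -9, -8, -6, -5, -4, -2, -1;
   -12, -6, -8, -4, -10, -8, -6, -5, -4, -3, -2, -1;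
   -10, -5, -6, -2, -7, -6, -5, -2, -2, -2, 0, 0;
   -8, -4, -5, -2, -6, -5, -4, -2, -1, -1, 0, 0;
   -6, -3, -4, -2, -5, -4, -3, -2, -1, 0, 0, 0;
   -4, -2, -2, 0, -2, -2, -2, 0, 0, 0, 2, 1;
   -2, -1, -1, 0, -1, -1, -1, 0, 0, 0, 1, 1]

def uQ10 : Fin 12 → ℤ := ![0, 0, 1, 2, 2, 1, 0, 2, 1, 0, 2, 1]

def gQ11 : Matrix (Fin 11) (Fin 11) ℤ :=
  !![-2, 1, 1, 0, 0, 1, 0, 0, 0, 0, 0;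
   1, -2, 0, 0, 0, 0, 0, 0, 0, 0, 0;
   1, 0, -2, 1, 0, 0, 0, 0, 0, 0, 0;
   0, 0, 1, -2, 1, 0, 0, 0, 0, 0, 0;
   0, 0, 0, 1, -2, 0, 0, 0, 0, 0, 0;
   1, 0, 0, 0, 0, -2, 1, 0, 0, 0, 0;
   0, 0, 0, 0, 0, 1, -2, 1, 0, 0, 0;
   0, 0, 0, 0, 0, 0, 1, -2, 1, 0, 0;
   0, 0, 0, 0, 0, 0, 0, 1, -2, 1, 0;
   0, 0, 0, 0, 0, 0, 0, 0, 1, -2, 1;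
   0, 0, 0, 0, 0, 0, 0, 0, 0, 1, -2]

def bQ11 : Matrix (Fin 11) (Fin 11) ℤ :=
  !![56, 28, 42, 28, 14, 48, 40, 32, 24, 16, 8;
   28, 11, 21, 14, 7, 24, 20, 16, 12, 8, 4;
   42, 21, 27, 18, 9, 36, 30, 24, 18, 12, 6;
   28, 14, 18, 8, 4, 24, 20, 16, 12, 8, 4;
   14, 7, 9, 4, -1, 12, 10, 8, 6, 4, 2;
   48, 24, 36, 24, 12, 36, 30, 24, 18, 12, 6;
   40, 20, 30, 20, 10, 30, 20, 16, 12, 8, 4;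
   32, 16, 24, 16, 8, 24, 16, 8, 6, 4, 2;
   24, 12, 18, 12, 6, 18, 12, 6, 0, 0, 0;
   16, 8, 12, 8, 4, 12, 8, 4, 0, -4, -2;
   8, 4, 6, 4, 2, 6, 4, 2, 0, -2, -4]

def cQ11 : Matrix (Fin 11) (Fin 11) ℤ :=
  !![19, 10, 14, 10, 5, 16, 14, 11, 8, 6, 3;
   10, 5, 7, 6, 3, 8, 8, 6, 4, 4, 2;
   14, 7, 9, 6, 3, 12, 10, 8, 6, 4, 2;
   10, 6, 6, 4, 2, 8, 8, 6, 4, 4, 2;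
   5, 3, 3, 2, 0, 4, 4, 3, 2, 2, 1;
   16, 8, 12, 8, 4, 12, 10, 8, 6, 4, 2;
   14, 8, 10, 8, 4, 10, 8, 6, 4, 4, 2;
   11, 6, 8, 6, 3, 8, 6, 3, 2, 2, 1;
   8, 4, 6, 4, 2, 6, 4, 2, 0, 0, 0;
   6, 4, 4, 4, 2, 4, 4, 2, 0, 0, 0;
   3, 2, 2, 2, 1, 2, 2, 1, 0, 0, -1]

def uQ11 : Fin 11 → ℤ := ![1, 2, 0, 2, 1, 0, 2, 1, 0, 2, 1]

def gQ12 : Matrix (Fin 10) (Fin 10) ℤ :=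
  !![-2, 1, 0, 1, 0, 1, 0, 0, 0, 0;
   1, -2, 1, 0, 0, 0, 0, 0, 0, 0;
   0, 1, -2, 0, 0, 0, 0, 0, 0, 0;
   1, 0, 0, -2, 1, 0, 0, 0, 0, 0;
   0, 0, 0, 1, -2, 0, 0, 0, 0, 0;
   1, 0, 0, 0, 0, -2, 1, 0, 0, 0;
   0, 0, 0, 0, 0, 1, -2, 1, 0, 0;
   0, 0, 0, 0, 0, 0, 1, -2, 1, 0;
   0, 0, 0, 0, 0, 0, 0, 1, -2, 1;
   0, 0, 0, 0, 0, 0, 0, 0, 1, -2]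

def bQ12 : Matrix (Fin 10) (Fin 10) ℤ :=
  !![-54, -36, -18, -36, -18, -45, -36, -27, -18, -9;
   -36, -18, -9, -24, -12, -30, -24, -18, -12, -6;
   -18, -9, 0, -12, -6, -15, -12, -9, -6, -3;
   -36, -24, -12, -18, -9, -30, -24, -18, -12, -6;
   -18, -12, -6, -9, 0, -15, -12, -9, -6, -3;
   -45, -30, -15, -30, -15, -30, -24, -18, -12, -6;
   -36, -24, -12, -24, -12, -24, -12, -9, -6, -3;
   -27, -18, -9, -18, -9, -18, -9, 0, 0, 0;
   -18, -12, -6, -12, -6, -12, -6, 0, 6, 3;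
   -9, -6, -3, -6, -3, -6, -3, 0, 3, 6]

def gW12 : Matrix (Fin 10) (Fin 10) ℤ :=
  !![-2, 1, 1, 0, 0, 0, 1, 0, 0, 0;
   1, -2, 0, 0, 0, 0, 0, 0, 0, 0;
   1, 0, -2, 1, 0, 0, 0, 0, 0, 0;
   0, 0, 1, -2, 1, 0, 0, 0, 0, 0;
   0, 0, 0, 1, -2, 1, 0, 0, 0, 0;
   0, 0, 0, 0, 1, -2, 0, 0, 0, 0;
   1, 0, 0, 0, 0, 0, -2, 1, 0, 0;
   0, 0, 0, 0, 0, 0, 1, -2, 1, 0;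
   0, 0, 0, 0, 0, 0, 0, 1, -2, 1;
   0, 0, 0, 0, 0, 0, 0, 0, 1, -2]

def bW12 : Matrix (Fin 10) (Fin 10) ℤ :=
  !![-50, -25, -40, -30, -20, -10, -40, -30, -20, -10;
   -25, -10, -20, -15, -10, -5, -20, -15, -10, -5;
   -40, -20, -28, -21, -14, -7, -32, -24, -16, -8;
   -30, -15, -21, -12, -8, -4, -24, -18, -12, -6;
   -20, -10, -14, -8, -2, -1, -16, -12, -8, -4;
   -10, -5, -7, -4, -1, 2, -8, -6, -4, -2;
   -40, -20, -32, -24, -16, -8, -28, -21, -14, -7;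
   -30, -15, -24, -18, -12, -6, -21, -12, -8, -4;
   -20, -10, -16, -12, -8, -4, -14, -8, -2, -1;
   -10, -5, -8, -6, -4, -2, -7, -4, -1, 2]

def gW13 : Matrix (Fin 9) (Fin 9) ℤ :=
  !![-2, 1, 0, 1, 0, 0, 1, 0, 0;
   1, -2, 1, 0, 0, 0, 0, 0, 0;
   0, 1, -2, 0, 0, 0, 0, 0, 0;
   1, 0, 0, -2, 1, 0, 0, 0, 0;
   0, 0, 0, 1, -2, 1, 0, 0, 0;
   0, 0, 0, 0, 1, -2, 0, 0, 0;
   1, 0, 0, 0, 0, 0, -2, 1, 0;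
   0, 0, 0, 0, 0, 0, 1, -2, 1;
   0, 0, 0, 0, 0, 0, 0, 1, -2]

def bW13 : Matrix (Fin 9) (Fin 9) ℤ :=
  !![48, 32, 16, 36, 24, 12, 36, 24, 12;
   32, 16, 8, 24, 16, 8, 24, 16, 8;
   16, 8, 0, 12, 8, 4, 12, 8, 4;
   36, 24, 12, 21, 14, 7, 27, 18, 9;
   24, 16, 8, 14, 4, 2, 18, 12, 6;
   12, 8, 4, 7, 2, -3, 9, 6, 3;
   36, 24, 12, 27, 18, 9, 21, 14, 7;
   24, 16, 8, 18, 12, 6, 14, 4, 2;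
   12, 8, 4, 9, 6, 3, 7, 2, -3]

def gS11 : Matrix (Fin 11) (Fin 11) ℤ :=
  !![-2, 1, 1, 0, 0, 0, 1, 0, 0, 0, 0;
   1, -2, 0, 0, 0, 0, 0, 0, 0, 0, 0;
   1, 0, -2, 1, 0, 0, 0, 0, 0, 0, 0;
   0, 0, 1, -2, 1, 0, 0, 0, 0, 0, 0;
   0, 0, 0, 1, -2, 1, 0, 0, 0, 0, 0;
   0, 0, 0, 0, 1, -2, 0, 0, 0, 0, 0;
   1, 0, 0, 0, 0, 0, -2, 1, 0, 0, 0;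
   0, 0, 0, 0, 0, 0, 1, -2, 1, 0, 0;
   0, 0, 0, 0, 0, 0, 0, 1, -2, 1, 0;
   0, 0, 0, 0, 0, 0, 0, 0, 1, -2, 1;
   0, 0, 0, 0, 0, 0, 0, 0, 0, 1, -2]

def bS11 : Matrix (Fin 11) (Fin 11) ℤ :=
  !![60, 30, 48, 36, 24, 12, 50, 40, 30, 20, 10;
   30, 11, 24, 18, 12, 6, 25, 20, 15, 10, 5;
   48, 24, 32, 24, 16, 8, 40, 32, 24, 16, 8;
   36, 18, 24, 12, 8, 4, 30, 24, 18, 12, 6;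
   24, 12, 16, 8, 0, 0, 20, 16, 12, 8, 4;
   12, 6, 8, 4, 0, -4, 10, 8, 6, 4, 2;
   50, 25, 40, 30, 20, 10, 35, 28, 21, 14, 7;
   40, 20, 32, 24, 16, 8, 28, 16, 12, 8, 4;
   30, 15, 24, 18, 12, 6, 21, 12, 3, 2, 1;
   20, 10, 16, 12, 8, 4, 14, 8, 2, -4, -2;
   10, 5, 8, 6, 4, 2, 7, 4, 1, -2, -5]

def gS12 : Matrix (Fin 10) (Fin 10) ℤ :=
  !![-2, 1, 0, 1, 0, 0, 1, 0, 0, 0;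
   1, -2, 1, 0, 0, 0, 0, 0, 0, 0;
   0, 1, -2, 0, 0, 0, 0, 0, 0, 0;
   1, 0, 0, -2, 1, 0, 0, 0, 0, 0;
   0, 0, 0, 1, -2, 1, 0, 0, 0, 0;
   0, 0, 0, 0, 1, -2, 0, 0, 0, 0;
   1, 0, 0, 0, 0, 0, -2, 1, 0, 0;
   0, 0, 0, 0, 0, 0, 1, -2, 1, 0;
   0, 0, 0, 0, 0, 0, 0, 1, -2, 1;
   0, 0, 0, 0, 0, 0, 0, 0, 1, -2]

def bS12 : Matrix (Fin 10) (Fin 10) ℤ :=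
  !![-60, -40, -20, -45, -30, -15, -48, -36, -24, -12;
   -40, -18, -9, -30, -20, -10, -32, -24, -16, -8;
   -20, -9, 2, -15, -10, -5, -16, -12, -8, -4;
   -45, -30, -15, -24, -16, -8, -36, -27, -18, -9;
   -30, -20, -10, -16, -2, -1, -24, -18, -12, -6;
   -15, -10, -5, -8, -1, 6, -12, -9, -6, -3;
   -48, -32, -16, -36, -24, -12, -28, -21, -14, -7;
   -36, -24, -12, -27, -18, -9, -21, -6, -4, -2;
   -24, -16, -8, -18, -12, -6, -14, -4, 6, 3;
   -12, -8, -4, -9, -6, -3, -7, -2, 3, 8]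

def gU12 : Matrix (Fin 10) (Fin 10) ℤ :=
  !![-2, 1, 0, 0, 1, 0, 0, 1, 0, 0;
   1, -2, 1, 0, 0, 0, 0, 0, 0, 0;
   0, 1, -2, 1, 0, 0, 0, 0, 0, 0;
   0, 0, 1, -2, 0, 0, 0, 0, 0, 0;
   1, 0, 0, 0, -2, 1, 0, 0, 0, 0;
   0, 0, 0, 0, 1, -2, 1, 0, 0, 0;
   0, 0, 0, 0, 0, 1, -2, 0, 0, 0;
   1, 0, 0, 0, 0, 0, 0, -2, 1, 0;
   0, 0, 0, 0, 0, 0, 0, 1, -2, 1;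
   0, 0, 0, 0, 0, 0, 0, 0, 1, -2]

def bU12 : Matrix (Fin 10) (Fin 10) ℤ :=
  !![-64, -48, -32, -16, -48, -32, -16, -48, -32, -16;
   -48, -24, -16, -8, -36, -24, -12, -36, -24, -12;
   -32, -16, 0, 0, -24, -16, -8, -24, -16, -8;
   -16, -8, 0, 8, -12, -8, -4, -12, -8, -4;
   -48, -36, -24, -12, -24, -16, -8, -36, -24, -12;
   -32, -24, -16, -8, -16, 0, 0, -24, -16, -8;
   -16, -12, -8, -4, -8, 0, 8, -12, -8, -4;
   -48, -36, -24, -12, -36, -24, -12, -24, -16, -8;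
   -32, -24, -16, -8, -24, -16, -8, -16, 0, 0;
   -16, -12, -8, -4, -12, -8, -4, -8, 0, 8]

def FE14a : Matrix (Fin 8) (Fin 8) ℤ :=
  !![1, 0, 0, 0, 0, 0, 0, 0;
   0, 0, 1, 0, 0, 0, 0, 0;
   0, 0, 0, 1, 0, 0, 0, 0;
   0, 0, 0, 0, 1, 0, 0, 0;
   0, 0, 0, 0, 0, 1, 0, 0;
   0, 1, 0, 0, 0, 0, 0, 0;
   -3, -2, -2, -1, -2, -1, 0, 0;
   0, 0, 0, 0, 0, 0, 0, 0]

def FE14b : Matrix (Fin 8) (Fin 8) ℤ :=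
  !![0, 0, 0, 0, 0, 0, 0, 0;
   0, 0, 0, 0, 0, 0, 0, 0;
   0, 0, 0, 0, 0, 0, 0, 0;
   0, 0, 0, 0, 0, 0, 0, 0;
   0, 0, 0, 0, 0, 0, 0, 0;
   0, 0, 0, 0, 0, 0, 0, 0;
   0, 0, 0, 0, 0, 0, 0, 0;
   0, 0, 0, 0, 0, 0, 0, 0]

def FE14h : Matrix (Fin 8) (Fin 2) ℤ :=
  !![0, 0;
   0, 0;
   0, 0;
   0, 0;
   0, 0;
   0, 0;
   1, 0;
   -1, 1]

def xE14a : Fin 8 → ℤ := ![-1, 1, 1, -1, -1, -1, -1, 0]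

def xE14b : Fin 8 → ℤ := ![0, 0, 0, 0, 0, 0, 0, 0]

def xE14h : Fin 2 → ℤ := ![1, 0]

def wE14 : Fin 8 → ℤ := ![12, 13, 2, 8, 4, 12, 3, 0]

def FZ13a : Matrix (Fin 9) (Fin 8) ℤ :=
  !![1, 0, 0, 0, 0, 0, 0, 0;
   0, 0, 1, 0, 0, 0, 0, 0;
   0, 0, 0, 1, 0, 0, 0, 0;
   0, 0, 0, 0, 1, 0, 0, 0;
   0, 0, 0, 0, 0, 1, 0, 0;
   0, 1, 0, 0, 0, 0, 0, 0;
   -3, -2, -2, -1, -2, -1, 0, 0;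
   0, 0, 0, 0, 0, 0, 0, 0;
   0, 0, 0, 0, 0, 0, 0, 0]

def FZ13b : Matrix (Fin 9) (Fin 8) ℤ :=
  !![0, 0, 0, 0, 0, 0, 0, 0;
   0, 0, 0, 0, 0, 0, 0, 0;
   0, 0, 0, 0, 0, 0, 0, 0;
   0, 0, 0, 0, 0, 0, 0, 0;
   0, 0, 0, 0, 0, 0, 0, 0;
   0, 0, 0, 0, 0, 0, 0, 0;
   0, 0, 0, 0, 0, 0, 0, 0;
   0, 0, 0, 0, 0, 0, 0, 0;
   0, 1, 0, 0, 0, 0, 0, 0]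

def FZ13h : Matrix (Fin 9) (Fin 2) ℤ :=
  !![0, 0;
   0, 0;
   0, 0;
   0, 0;
   0, 0;
   0, 0;
   1, 0;
   -1, 1;
   1, 0]

def xZ13a : Fin 8 → ℤ := ![1, 1, 0, 1, 0, 1, 1, 1]

def xZ13b : Fin 8 → ℤ := ![0, -1, 0, 0, 0, 0, 0, 0]

def xZ13h : Fin 2 → ℤ := ![-1, 1]

def wZ13 : Fin 9 → ℤ := ![6, 2, 4, 1, 2, 6, 3, 3, -3]

def FQ12a : Matrix (Fin 10) (Fin 8) ℤ :=
  !![1, 0, 0, 0, 0, 0, 0, 0;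
   0, 0, 1, 0, 0, 0, 0, 0;
   0, 0, 0, 1, 0, 0, 0, 0;
   0, 0, 0, 0, 1, 0, 0, 0;
   0, 0, 0, 0, 0, 1, 0, 0;
   0, 1, 0, 0, 0, 0, 0, 0;
   -3, -2, -2, -1, -2, -1, 0, 0;
   0, 0, 0, 0, 0, 0, 0, 0;
   0, 0, 0, 0, 0, 0, 0, 0;
   0, 0, 0, 0, 0, 0, 0, 0]

def FQ12b : Matrix (Fin 10) (Fin 8) ℤ :=
  !![0, 0, 0, 0, 0, 0, 0, 0;
   0, 0, 0, 0, 0, 0, 0, 0;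
   0, 0, 0, 0, 0, 0, 0, 0;
   0, 0, 0, 0, 0, 0, 0, 0;
   0, 0, 0, 0, 0, 0, 0, 0;
   0, 0, 0, 0, 0, 0, 0, 0;
   0, 0, 0, 0, 0, 0, 0, 0;
   0, 0, 0, 0, 0, 0, 0, 0;
   0, 1, 0, 0, 0, 0, 0, 0;
   1, 0, 0, 0, 0, 0, 0, 0]

def FQ12h : Matrix (Fin 10) (Fin 2) ℤ :=
  !![0, 0;
   0, 0;
   0, 0;
   0, 0;
   0, 0;
   0, 0;
   1, 0;
   -1, 1;
   1, 0;
   0, 0]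

def xQ12a : Fin 8 → ℤ := ![1, 1, -1, 0, 0, 0, -1, -1]

def xQ12b : Fin 8 → ℤ := ![1, 0, 0, 0, 0, 0, 0, 0]

def xQ12h : Fin 2 → ℤ := ![1, 0]

def wQ12 : Fin 10 → ℤ := ![18, 7, 5, 11, 7, 12, 3, 0, 0, 3]

def yE14a : Fin 8 → ℤ := ![-6, -3, -4, -2, -5, -4, -3, 0]

def yE14b : Fin 8 → ℤ := ![0, 0, 0, 0, 0, 0, 0, 0]

def yE14h : Fin 2 → ℤ := ![0, 0]

def yZ13a : Fin 8 → ℤ := ![6, 3, 4, 2, 5, 4, 3, 3]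

def yZ13b : Fin 8 → ℤ := ![0, 0, 0, 0, 0, 0, 0, 0]

def yZ13h : Fin 2 → ℤ := ![0, 0]

def yQ12a : Fin 8 → ℤ := ![-6, -3, -4, -2, -5, -4, -3, -3]

def yQ12b : Fin 8 → ℤ := ![0, 0, 0, 0, 0, 0, 0, 0]

def yQ12h : Fin 2 → ℤ := ![0, 0]

lemma single_vecMul {n : ℕ} {κ : Type*} [Fintype κ] (F : Matrix (Fin n) κ ℤ) (j : Fin n) :
    Pi.single j (1 : ℤ) ᵥ* F = F j := by
  funext k
  simp [Matrix.vecMul, dotProduct, Pi.single_apply, Finset.sum_ite_eq]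

lemma inj_of_nondeg {ι : Type*} [Fintype ι] {n : ℕ}
    (A : Matrix (Fin n) (Fin n) ℤ) (B : Matrix ι ι ℤ)
    (f : (Fin n → ℤ) →ₗ[ℤ] (ι → ℤ))
    (hpres : ∀ x y, bilinZ B (f x) (f y) = bilinZ A x y)
    (hndZ : ∀ z : Fin n → ℤ, (∀ j, ∑ i, z i * A i j = 0) → z = 0) :
    Function.Injective f := by
  intro a b hab
  have h0 : f (a - b) = 0 := by rw [map_sub, hab, sub_self]
  have hz : ∀ j, ∑ i, (a - b) i * A i j = 0 := by
    intro j
    rw [← bilinZ_single A (a - b) j, ← hpres (a - b) (Pi.single j 1), h0]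
    simp [bilinZ]
  exact sub_eq_zero.mp (hndZ _ hz)

/-- per-type Gram identifications -/
lemma PGram_E12 : PGram TriType.E12 = gE12 := by
  show starGram 2 3 7 = gE12; exact starGram_eq _ (by decide)
lemma hAB_E12 : ∀ i k, ∑ j, gE12 i j * bE12 j k = if i = k then (-1 : ℤ) else 0 := by decide
lemma PGram_E13 : PGram TriType.E13 = gE13 := by
  show starGram 2 4 5 = gE13; exact starGram_eq _ (by decide)
lemma hAB_E13 : ∀ i k, ∑ j, gE13 i j * bE13 j k = if i = k then (2 : ℤ) else 0 := by decide
lemma PGram_E14 : PGram TriType.E14 = gE14 := by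
  show starGram 3 3 4 = gE14; exact starGram_eq _ (by decide)
lemma hAB_E14 : ∀ i k, ∑ j, gE14 i j * bE14 j k = if i = k then (-3 : ℤ) else 0 := by decide
lemma PGram_Z11 : PGram TriType.Z11 = gZ11 := by
  show starGram 2 3 8 = gZ11; exact starGram_eq _ (by decide)
lemma hAB_Z11 : ∀ i k, ∑ j, gZ11 i j * bZ11 j k = if i = k then (2 : ℤ) else 0 := by decide
lemma PGram_Z12 : PGram TriType.Z12 = gZ12 := by
  show starGram 2 4 6 = gZ12; exact starGram_eq _ (by decide)
lemma hAB_Z12 : ∀ i k, ∑ j, gZ12 i j * bZ12 j k = if i = k then (-4 : ℤ) else 0 := by decide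
lemma PGram_Z13 : PGram TriType.Z13 = gZ13 := by
  show starGram 3 3 5 = gZ13; exact starGram_eq _ (by decide)
lemma hAB_Z13 : ∀ i k, ∑ j, gZ13 i j * bZ13 j k = if i = k then (6 : ℤ) else 0 := by decide
lemma PGram_Q10 : PGram TriType.Q10 = gQ10 := by
  show starGram 2 3 9 = gQ10; exact starGram_eq _ (by decide)
lemma hAB_Q10 : ∀ i k, ∑ j, gQ10 i j * bQ10 j k = if i = k then (-3 : ℤ) else 0 := by decide
lemma PGram_Q11 : PGram TriType.Q11 = gQ11 := by
  show starGram 2 4 7 = gQ11; exact starGram_eq _ (by decide)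
lemma hAB_Q11 : ∀ i k, ∑ j, gQ11 i j * bQ11 j k = if i = k then (6 : ℤ) else 0 := by decide
lemma PGram_Q12 : PGram TriType.Q12 = gQ12 := by
  show starGram 3 3 6 = gQ12; exact starGram_eq _ (by decide)
lemma hAB_Q12 : ∀ i k, ∑ j, gQ12 i j * bQ12 j k = if i = k then (-9 : ℤ) else 0 := by decide
lemma PGram_W12 : PGram TriType.W12 = gW12 := by
  show starGram 2 5 5 = gW12; exact starGram_eq _ (by decide)
lemma hAB_W12 : ∀ i k, ∑ j, gW12 i j * bW12 j k = if i = k then (-5 : ℤ) else 0 := by decide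
lemma PGram_W13 : PGram TriType.W13 = gW13 := by
  show starGram 3 4 4 = gW13; exact starGram_eq _ (by decide)
lemma hAB_W13 : ∀ i k, ∑ j, gW13 i j * bW13 j k = if i = k then (8 : ℤ) else 0 := by decide
lemma PGram_S11 : PGram TriType.S11 = gS11 := by
  show starGram 2 5 6 = gS11; exact starGram_eq _ (by decide)
lemma hAB_S11 : ∀ i k, ∑ j, gS11 i j * bS11 j k = if i = k then (8 : ℤ) else 0 := by decide
lemma PGram_S12 : PGram TriType.S12 = gS12 := by
  show starGram 3 4 5 = gS12; exact starGram_eq _ (by decide)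
lemma hAB_S12 : ∀ i k, ∑ j, gS12 i j * bS12 j k = if i = k then (-13 : ℤ) else 0 := by decide
lemma PGram_U12 : PGram TriType.U12 = gU12 := by
  show starGram 4 4 4 = gU12; exact starGram_eq _ (by decide)
lemma hAB_U12 : ∀ i k, ∑ j, gU12 i j * bU12 j k = if i = k then (-16 : ℤ) else 0 := by decide

lemma hCw_Q10 : ∀ j k, bQ10 j k = 3 * cQ10 j k - uQ10 j * uQ10 k := by decide
lemma hCw_Q11 : ∀ j k, bQ11 j k = 3 * cQ11 j k - uQ11 j * uQ11 k := by decide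

def FE14f : Matrix (Fin 8) Ix18 ℤ :=
  Matrix.of fun i => Sum.elim (Sum.elim (FE14a i) (FE14b i)) (FE14h i)
def xE14v : Ix18 → ℤ := Sum.elim (Sum.elim xE14a xE14b) xE14h
def yE14v : Ix18 → ℤ := Sum.elim (Sum.elim yE14a yE14b) yE14h

lemma hF_E14 : FE14f * Gram18 * FE14fᵀ = gE14 := by
  apply Matrix.ext
  decide
lemma hy_E14 : ∀ i : Ix18, 3 * xE14v i - (wE14 ᵥ* FE14f) i = yE14v i := by decide
lemma horth_E14 : ∀ j, bilinZ Gram18 yE14v (FE14f j) = 0 := by decide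
lemma hval_E14 : bilinZ Gram18 yE14v yE14v = -6 := by decide

def FZ13f : Matrix (Fin 9) Ix18 ℤ :=
  Matrix.of fun i => Sum.elim (Sum.elim (FZ13a i) (FZ13b i)) (FZ13h i)
def xZ13v : Ix18 → ℤ := Sum.elim (Sum.elim xZ13a xZ13b) xZ13h
def yZ13v : Ix18 → ℤ := Sum.elim (Sum.elim yZ13a yZ13b) yZ13h

lemma hF_Z13 : FZ13f * Gram18 * FZ13fᵀ = gZ13 := by
  apply Matrix.ext
  decide
lemma hy_Z13 : ∀ i : Ix18, 3 * xZ13v i - (wZ13 ᵥ* FZ13f) i = yZ13v i := by decide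
lemma horth_Z13 : ∀ j, bilinZ Gram18 yZ13v (FZ13f j) = 0 := by decide
lemma hval_Z13 : bilinZ Gram18 yZ13v yZ13v = -6 := by decide

def FQ12f : Matrix (Fin 10) Ix18 ℤ :=
  Matrix.of fun i => Sum.elim (Sum.elim (FQ12a i) (FQ12b i)) (FQ12h i)
def xQ12v : Ix18 → ℤ := Sum.elim (Sum.elim xQ12a xQ12b) xQ12h
def yQ12v : Ix18 → ℤ := Sum.elim (Sum.elim yQ12a yQ12b) yQ12h

lemma hF_Q12 : FQ12f * Gram18 * FQ12fᵀ = gQ12 := by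
  apply Matrix.ext
  decide
lemma hy_Q12 : ∀ i : Ix18, 3 * xQ12v i - (wQ12 ᵥ* FQ12f) i = yQ12v i := by decide
lemma horth_Q12 : ∀ j, bilinZ Gram18 yQ12v (FQ12f j) = 0 := by decide
lemma hval_Q12 : bilinZ Gram18 yQ12v yQ12v = -6 := by decide

lemma forward_contra {n : ℕ} (N : ℕ) (A Bs : Matrix (Fin n) (Fin n) ℤ) (d : ℤ)
    (hAB : ∀ i k, ∑ j, A i j * Bs j k = if i = k then d else 0)
    (f : (Fin n → ℤ) →ₗ[ℤ] (LambdaIx N → ℤ))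
    (hpres : ∀ x y, bilinZ (LambdaGram N) (f x) (f y) = bilinZ A x y)
    (β : (LambdaIx N → ℤ) ⧸ primHull (LinearMap.range f))
    (hβ : inducedForm (LambdaGram N) (LinearMap.range f) β β = -2/3) :
    ∃ (t : ℤ) (v : Fin n → ℤ),
      3 * (∑ j, ∑ k, v j * Bs j k * v k) = 3 * d * t + 2 * d := by
  obtain ⟨t, v, c, hsys, hval⟩ :=
    key_forward A (LambdaGram N) f (LambdaGram_symm N) hpres β hβ
  exact ⟨t, v, extract A Bs d hAB t v c hsys hval⟩

lemma backward_exists {n : ℕ} (N : ℕ) (hN : 0 < N)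
    (A Bs : Matrix (Fin n) (Fin n) ℤ) (d : ℤ) (hd : d ≠ 0)
    (hAB : ∀ i k, ∑ j, A i j * Bs j k = if i = k then d else 0)
    (F : Matrix (Fin n) Ix18 ℤ) (hF : F * Gram18 * Fᵀ = A)
    (xv yv : Ix18 → ℤ) (w : Fin n → ℤ)
    (hy : ∀ i, 3 * xv i - (w ᵥ* F) i = yv i)
    (horth : ∀ j, bilinZ Gram18 yv (F j) = 0)
    (hval : bilinZ Gram18 yv yv = -6) :
    ∃ f : (Fin n → ℤ) →ₗ[ℤ] (LambdaIx N → ℤ),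
      IsEmbedding A (LambdaGram N) f ∧
      ∃ β : (LambdaIx N → ℤ) ⧸ primHull (LinearMap.range f),
        inducedForm (LambdaGram N) (LinearMap.range f) β β = -2/3 := by
  have hι := iota18_inj N hN
  set f : (Fin n → ℤ) →ₗ[ℤ] (LambdaIx N → ℤ) :=
    (extendL (iota18 N hN) hι).comp F.vecMulLinear with hfdef
  have hfapp : ∀ z, f z = extendL (iota18 N hN) hι (z ᵥ* F) := fun z => rfl
  have hpres : ∀ a b, bilinZ (LambdaGram N) (f a) (f b) = bilinZ A a b := by
    intro a b
    rw [hfapp, hfapp, bilinZ_extendL, lambda_submatrix, bilinZ_vecMul A Gram18 F hF]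
  have hndZ := nondegZ_of_inv A Bs d hd hAB
  have hndQ := nondegQ_of_inv A Bs d hd hAB
  refine ⟨f, ⟨inj_of_nondeg A _ f hpres hndZ, hpres⟩, ?_⟩
  have hyext : (3 : ℤ) • (extendL (iota18 N hN) hι xv) - f w
      = extendL (iota18 N hN) hι yv := by
    rw [hfapp, ← map_zsmul, ← map_sub]
    congr 1
    funext i
    have h := hy i
    simpa [Pi.smul_apply, smul_eq_mul] using h
  refine exists_beta A (LambdaGram N) f hpres hndQ (extendL _ hι xv) 3 (by norm_num) w
    (fun j => ?_) ?_
  · rw [hyext, hfapp, single_vecMul, bilinZ_extendL, lambda_submatrix, horth j]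
  · rw [hyext, bilinZ_extendL, lambda_submatrix, hval]
    norm_num


/-- for `N ≥ 1`, there is an embedding of `P(T)` into `Λ_N` such that the
root module `(Λ_N/P̃, F_N)` contains a root `β` with `β² = -2/3` if and only if
`T ∈ {E14, Z13, Q12}`. -/
theorem statement_8 (N : ℕ) (hN : 1 ≤ N) (T : TriType) :
    (∃ f : (Fin (Prank T) → ℤ) →ₗ[ℤ] (LambdaIx N → ℤ),
       IsEmbedding (PGram T) (LambdaGram N) f ∧
       ∃ β : (LambdaIx N → ℤ) ⧸ primHull (LinearMap.range f),
         inducedForm (LambdaGram N) (LinearMap.range f) β β = -2/3) ↔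
    (T = .E14 ∨ T = .Z13 ∨ T = .Q12) := by
  have hN' : 0 < N := hN
  cases T with
  | E14 =>
      refine iff_of_true ?_ (Or.inl rfl)
      rw [show PGram TriType.E14 = gE14 from PGram_E14]
      exact backward_exists N hN' gE14 bE14 (-3) (by norm_num) hAB_E14 FE14f hF_E14
        xE14v yE14v wE14 hy_E14 horth_E14 hval_E14
  | Z13 =>
      refine iff_of_true ?_ (Or.inr (Or.inl rfl))
      rw [show PGram TriType.Z13 = gZ13 from PGram_Z13]
      exact backward_exists N hN' gZ13 bZ13 6 (by norm_num) hAB_Z13 FZ13f hF_Z13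
        xZ13v yZ13v wZ13 hy_Z13 horth_Z13 hval_Z13
  | Q12 =>
      refine iff_of_true ?_ (Or.inr (Or.inr rfl))
      rw [show PGram TriType.Q12 = gQ12 from PGram_Q12]
      exact backward_exists N hN' gQ12 bQ12 (-9) (by norm_num) hAB_Q12 FQ12f hF_Q12
        xQ12v yQ12v wQ12 hy_Q12 horth_Q12 hval_Q12
  | E12 =>
      refine iff_of_false ?_ (by simp)
      rintro ⟨f, ⟨-, hpres⟩, β, hβ⟩
      simp only [PGram_E12] at hpres
      obtain ⟨t, v, hext⟩ := forward_contra N gE12 bE12 (-1) hAB_E12 f hpres β hβ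
      omega
  | E13 =>
      refine iff_of_false ?_ (by simp)
      rintro ⟨f, ⟨-, hpres⟩, β, hβ⟩
      simp only [PGram_E13] at hpres
      obtain ⟨t, v, hext⟩ := forward_contra N gE13 bE13 2 hAB_E13 f hpres β hβ
      omega
  | Z11 =>
      refine iff_of_false ?_ (by simp)
      rintro ⟨f, ⟨-, hpres⟩, β, hβ⟩
      simp only [PGram_Z11] at hpres
      obtain ⟨t, v, hext⟩ := forward_contra N gZ11 bZ11 2 hAB_Z11 f hpres β hβ
      omega
  | Z12 =>
      refine iff_of_false ?_ (by simp)
      rintro ⟨f, ⟨-, hpres⟩, β, hβ⟩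
      simp only [PGram_Z12] at hpres
      obtain ⟨t, v, hext⟩ := forward_contra N gZ12 bZ12 (-4) hAB_Z12 f hpres β hβ
      omega
  | W12 =>
      refine iff_of_false ?_ (by simp)
      rintro ⟨f, ⟨-, hpres⟩, β, hβ⟩
      simp only [PGram_W12] at hpres
      obtain ⟨t, v, hext⟩ := forward_contra N gW12 bW12 (-5) hAB_W12 f hpres β hβ
      omega
  | W13 =>
      refine iff_of_false ?_ (by simp)
      rintro ⟨f, ⟨-, hpres⟩, β, hβ⟩
      simp only [PGram_W13] at hpres
      obtain ⟨t, v, hext⟩ := forward_contra N gW13 bW13 8 hAB_W13 f hpres β hβ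
      omega
  | S11 =>
      refine iff_of_false ?_ (by simp)
      rintro ⟨f, ⟨-, hpres⟩, β, hβ⟩
      simp only [PGram_S11] at hpres
      obtain ⟨t, v, hext⟩ := forward_contra N gS11 bS11 8 hAB_S11 f hpres β hβ
      omega
  | S12 =>
      refine iff_of_false ?_ (by simp)
      rintro ⟨f, ⟨-, hpres⟩, β, hβ⟩
      simp only [PGram_S12] at hpres
      obtain ⟨t, v, hext⟩ := forward_contra N gS12 bS12 (-13) hAB_S12 f hpres β hβ
      omega
  | U12 =>
      refine iff_of_false ?_ (by simp)
      rintro ⟨f, ⟨-, hpres⟩, β, hβ⟩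
      simp only [PGram_U12] at hpres
      obtain ⟨t, v, hext⟩ := forward_contra N gU12 bU12 (-16) hAB_U12 f hpres β hβ
      omega
  | Q10 =>
      refine iff_of_false ?_ (by simp)
      rintro ⟨f, ⟨-, hpres⟩, β, hβ⟩
      simp only [PGram_Q10] at hpres
      obtain ⟨t, v, hext⟩ := forward_contra N gQ10 bQ10 (-3) hAB_Q10 f hpres β hβ
      rw [wwT_sum bQ10 cQ10 uQ10 hCw_Q10 v] at hext
      have hsq := sq_emod3 (∑ j, uQ10 j * v j)
      obtain ⟨S, hS⟩ : ∃ S, (∑ j, uQ10 j * v j) * (∑ j, uQ10 j * v j) = S := ⟨_, rfl⟩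
      rw [hS] at hext hsq
      obtain ⟨U, hU⟩ : ∃ U, (∑ j, ∑ k, v j * cQ10 j k * v k) = U := ⟨_, rfl⟩
      rw [hU] at hext
      omega
  | Q11 =>
      refine iff_of_false ?_ (by simp)
      rintro ⟨f, ⟨-, hpres⟩, β, hβ⟩
      simp only [PGram_Q11] at hpres
      obtain ⟨t, v, hext⟩ := forward_contra N gQ11 bQ11 6 hAB_Q11 f hpres β hβ
      rw [wwT_sum bQ11 cQ11 uQ11 hCw_Q11 v] at hext
      have hsq := sq_emod3 (∑ j, uQ11 j * v j)
      obtain ⟨S, hS⟩ : ∃ S, (∑ j, uQ11 j * v j) * (∑ j, uQ11 j * v j) = S := ⟨_, rfl⟩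
      rw [hS] at hext hsq
      obtain ⟨U, hU⟩ : ∃ U, (∑ j, ∑ k, v j * cQ11 j k * v k) = U := ⟨_, rfl⟩
      rw [hU] at hext
      omega

end Urabe
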